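/- arXiv:math/0606055 — 3 statements merged into one kernel-verified Lean document; each statement's English description precedes it below -/
import Mathlib

section
/- Let P be an irreducible stochastic matrix on a countable set X with spectral radius ρ(P). Then ρ(P) = min{ t > 0 : there exists f : X → (0,∞) with ∑_y p(x,y) f(y) ≤ t·f(x) for all x ∈ X }. Concretely: (a) if for some t > 0 there exists a strictly positive function f with ∑_y p(x,y) f(y) ≤ t·f(x) for all x, then t ≥ ρ(P); and (b) there exists a strictly positive function f with ∑_y p(x,y) f(y) ≤ ρ(P)·f(x) for all x. -/
open scoped Classical ENNReal
open Filter

/-- n-step transition probabilities: entries of the n-th matrix power of `p`. -/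
noncomputable def matPow {X : Type*} (p : X → X → ℝ) : ℕ → X → X → ℝ
  | 0 => fun x y => if x = y then 1 else 0
  | n + 1 => fun x y => ∑' z : X, p x z * matPow p n z y

/-- Spectral radius based at `x`: `limsup_n (p^{(n)}(x,x))^{1/n}`. -/
noncomputable def specRad {X : Type*} (p : X → X → ℝ) (x : X) : ℝ :=
  limsup (fun n : ℕ => (matPow p n x x) ^ ((n : ℝ)⁻¹)) atTop



set_option linter.unusedSectionVars false

namespace SpecAux

variable {X : Type*} [Countable X]

noncomputable def Q (p : X → X → ℝ) : ℕ → X → X → ℝ≥0∞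
  | 0 => fun x y => if x = y then 1 else 0
  | n + 1 => fun x y => ∑' z : X, ENNReal.ofReal (p x z) * Q p n z y

variable {p : X → X → ℝ}

lemma psum (hp0 : ∀ x y, 0 ≤ p x y) (hp1 : ∀ x, ∑' y : X, p x y = 1) (x : X) :
    ∑' z : X, ENNReal.ofReal (p x z) = 1 := by
  have hs : Summable (p x) := by
    by_contra h
    have h1 := hp1 x
    rw [tsum_eq_zero_of_not_summable h] at h1
    exact zero_ne_one h1
  rw [← ENNReal.ofReal_tsum_of_nonneg (hp0 x) hs, hp1]
  exact ENNReal.ofReal_one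

lemma Qrow (hp0 : ∀ x y, 0 ≤ p x y) (hp1 : ∀ x, ∑' y : X, p x y = 1) :
    ∀ (n : ℕ) (x : X), ∑' y : X, Q p n x y = 1 := by
  intro n
  induction n with
  | zero =>
    intro x
    simp only [Q]
    rw [tsum_eq_single x] <;> simp (config := {contextual := true}) [eq_comm]
  | succ n ih =>
    intro x
    simp only [Q]
    rw [ENNReal.tsum_comm]
    calc ∑' (z : X), ∑' (y : X), ENNReal.ofReal (p x z) * Q p n z y
        = ∑' (z : X), ENNReal.ofReal (p x z) * ∑' (y : X), Q p n z y := by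
          simp [ENNReal.tsum_mul_left]
      _ = ∑' (z : X), ENNReal.ofReal (p x z) := by simp [ih]
      _ = 1 := psum hp0 hp1 x

lemma Q_le_one (hp0 : ∀ x y, 0 ≤ p x y) (hp1 : ∀ x, ∑' y : X, p x y = 1)
    (n : ℕ) (x y : X) : Q p n x y ≤ 1 := by
  rw [← Qrow hp0 hp1 n x]
  exact ENNReal.le_tsum y

lemma Q_ne_top (hp0 : ∀ x y, 0 ≤ p x y) (hp1 : ∀ x, ∑' y : X, p x y = 1)
    (n : ℕ) (x y : X) : Q p n x y ≠ ⊤ :=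
  ne_top_of_le_ne_top ENNReal.one_ne_top (Q_le_one hp0 hp1 n x y)

lemma matPow_eq (hp0 : ∀ x y, 0 ≤ p x y) (hp1 : ∀ x, ∑' y : X, p x y = 1) :
    ∀ (n : ℕ) (x y : X), matPow p n x y = (Q p n x y).toReal := by
  intro n
  induction n with
  | zero => intro x y; simp only [matPow, Q]; split <;> simp
  | succ n ih =>
    intro x y
    simp only [matPow, Q]
    have h : (∑' z : X, ENNReal.ofReal (p x z) * Q p n z y).toReal
        = ∑' z : X, (ENNReal.ofReal (p x z) * Q p n z y).toReal :=
      ENNReal.tsum_toReal_eq (fun z =>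
        ENNReal.mul_ne_top ENNReal.ofReal_ne_top (Q_ne_top hp0 hp1 n z y))
    rw [h]
    congr 1
    funext z
    rw [ENNReal.toReal_mul, ENNReal.toReal_ofReal (hp0 x z), ih]

lemma Q_eq (hp0 : ∀ x y, 0 ≤ p x y) (hp1 : ∀ x, ∑' y : X, p x y = 1)
    (n : ℕ) (x y : X) : Q p n x y = ENNReal.ofReal (matPow p n x y) := by
  rw [matPow_eq hp0 hp1, ENNReal.ofReal_toReal (Q_ne_top hp0 hp1 n x y)]

lemma matPow_nonneg (hp0 : ∀ x y, 0 ≤ p x y) (hp1 : ∀ x, ∑' y : X, p x y = 1)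
    (n : ℕ) (x y : X) : 0 ≤ matPow p n x y := by
  rw [matPow_eq hp0 hp1]; exact ENNReal.toReal_nonneg

lemma matPow_le_one (hp0 : ∀ x y, 0 ≤ p x y) (hp1 : ∀ x, ∑' y : X, p x y = 1)
    (n : ℕ) (x y : X) : matPow p n x y ≤ 1 := by
  rw [matPow_eq hp0 hp1]
  exact ENNReal.toReal_le_of_le_ofReal zero_le_one (by simpa using Q_le_one hp0 hp1 n x y)

omit [Countable X] in
lemma Qsemi : ∀ (m n : ℕ) (x y : X),
    Q p (m + n) x y = ∑' z : X, Q p m x z * Q p n z y := by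
  intro m
  induction m with
  | zero =>
    intro n x y
    simp only [Nat.zero_add, Q]
    rw [tsum_eq_single x] <;> simp (config := {contextual := true}) [eq_comm]
  | succ m ih =>
    intro n x y
    have : m + 1 + n = (m + n) + 1 := by omega
    rw [this]
    simp only [Q]
    calc ∑' z : X, ENNReal.ofReal (p x z) * Q p (m + n) z y
        = ∑' z : X, ENNReal.ofReal (p x z) * ∑' w : X, Q p m z w * Q p n w y := by
          simp only [ih]
      _ = ∑' z : X, ∑' w : X, ENNReal.ofReal (p x z) * Q p m z w * Q p n w y := by
          congr 1; funext z; rw [← ENNReal.tsum_mul_left]; simp [mul_assoc]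
      _ = ∑' w : X, (∑' z : X, ENNReal.ofReal (p x z) * Q p m z w) * Q p n w y := by
          rw [ENNReal.tsum_comm]; congr 1; funext w; rw [ENNReal.tsum_mul_right]

omit [Countable X] in
lemma Qsub (m n : ℕ) (x z y : X) : Q p m x z * Q p n z y ≤ Q p (m + n) x y := by
  rw [Qsemi]
  exact ENNReal.le_tsum z

end SpecAux

namespace SpecAux
variable {X : Type*} [Countable X] {p : X → X → ℝ}

lemma matPow_submul (hp0 : ∀ x y, 0 ≤ p x y) (hp1 : ∀ x, ∑' y : X, p x y = 1)
    (m n : ℕ) (x z y : X) :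
    matPow p m x z * matPow p n z y ≤ matPow p (m + n) x y := by
  have h := Qsub (p := p) m n x z y
  rw [Q_eq hp0 hp1, Q_eq hp0 hp1, Q_eq hp0 hp1,
    ← ENNReal.ofReal_mul (matPow_nonneg hp0 hp1 m x z)] at h
  exact (ENNReal.ofReal_le_ofReal_iff (matPow_nonneg hp0 hp1 _ x y)).mp h

lemma u_nonneg (hp0 : ∀ x y, 0 ≤ p x y) (hp1 : ∀ x, ∑' y : X, p x y = 1) (x : X) (n : ℕ) :
    0 ≤ (matPow p n x x) ^ ((n : ℝ)⁻¹) :=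
  Real.rpow_nonneg (matPow_nonneg hp0 hp1 n x x) _

lemma u_le_one (hp0 : ∀ x y, 0 ≤ p x y) (hp1 : ∀ x, ∑' y : X, p x y = 1) (x : X) (n : ℕ) :
    (matPow p n x x) ^ ((n : ℝ)⁻¹) ≤ 1 :=
  Real.rpow_le_one (matPow_nonneg hp0 hp1 n x x) (matPow_le_one hp0 hp1 n x x)
    (by positivity)

lemma u_bddAbove (hp0 : ∀ x y, 0 ≤ p x y) (hp1 : ∀ x, ∑' y : X, p x y = 1) (x : X) :
    IsBoundedUnder (· ≤ ·) atTop (fun n : ℕ => (matPow p n x x) ^ ((n : ℝ)⁻¹)) :=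
  isBoundedUnder_of ⟨1, fun n => u_le_one hp0 hp1 x n⟩

lemma u_bddBelow (hp0 : ∀ x y, 0 ≤ p x y) (hp1 : ∀ x, ∑' y : X, p x y = 1) (x : X) :
    IsBoundedUnder (· ≥ ·) atTop (fun n : ℕ => (matPow p n x x) ^ ((n : ℝ)⁻¹)) :=
  isBoundedUnder_of ⟨0, fun n => u_nonneg hp0 hp1 x n⟩

lemma specRad_le_of_pow_le (hp0 : ∀ x y, 0 ≤ p x y) (hp1 : ∀ x, ∑' y : X, p x y = 1)
    (x : X) {t : ℝ} (ht : 0 < t) (h : ∀ n : ℕ, 1 ≤ n → matPow p n x x ≤ t ^ n) :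
    specRad p x ≤ t := by
  refine limsup_le_of_le ((u_bddBelow hp0 hp1 x).isCoboundedUnder_le) ?_
  filter_upwards [eventually_ge_atTop 1] with n hn
  have hne : (n : ℝ) ≠ 0 := Nat.cast_ne_zero.mpr (by omega)
  calc (matPow p n x x) ^ ((n : ℝ)⁻¹)
      ≤ (t ^ n) ^ ((n : ℝ)⁻¹) :=
        Real.rpow_le_rpow (matPow_nonneg hp0 hp1 n x x) (h n hn) (by positivity)
    _ = t := by
        rw [← Real.rpow_natCast t n, ← Real.rpow_mul ht.le, mul_inv_cancel₀ hne,
          Real.rpow_one]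

lemma specRad_le_one (hp0 : ∀ x y, 0 ≤ p x y) (hp1 : ∀ x, ∑' y : X, p x y = 1) (x : X) :
    specRad p x ≤ 1 :=
  specRad_le_of_pow_le hp0 hp1 x one_pos (fun n _ => by
    simpa using matPow_le_one hp0 hp1 n x x)

lemma specRad_pos (hp0 : ∀ x y, 0 ≤ p x y) (hp1 : ∀ x, ∑' y : X, p x y = 1)
    (hirr : ∀ x y, ∃ n : ℕ, 1 ≤ n ∧ 0 < matPow p n x y) (x : X) :
    0 < specRad p x := by
  obtain ⟨n, hn1, hc⟩ := hirr x x
  set c := matPow p n x x with hcdef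
  have hc1 : c ≤ 1 := matPow_le_one hp0 hp1 n x x
  have hpow : ∀ k : ℕ, c ^ (k + 1) ≤ matPow p ((k + 1) * n) x x := by
    intro k
    induction k with
    | zero => simp [hcdef]
    | succ k ih =>
      have h2 : matPow p ((k + 1) * n) x x * matPow p n x x
          ≤ matPow p ((k + 1) * n + n) x x := matPow_submul hp0 hp1 _ _ x x x
      have : (k + 1 + 1) * n = (k + 1) * n + n := by ring
      rw [this, pow_succ]
      exact le_trans (mul_le_mul_of_nonneg_right ih hc.le) h2
  have hfreq : ∃ᶠ m in atTop, c ^ ((n : ℝ)⁻¹) ≤ (matPow p m x x) ^ ((m : ℝ)⁻¹) := by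
    rw [frequently_atTop]
    intro N
    refine ⟨(N + 1) * n, ?_, ?_⟩
    · calc N ≤ N + 1 := by omega
        _ ≤ (N + 1) * n := Nat.le_mul_of_pos_right _ (by omega)
    · have hm : ((N + 1) * n : ℕ) ≠ 0 := by positivity
      calc c ^ ((n : ℝ)⁻¹)
          = (c ^ (N + 1)) ^ ((((N + 1) * n : ℕ) : ℝ)⁻¹) := by
            rw [← Real.rpow_natCast c (N + 1), ← Real.rpow_mul hc.le]
            congr 1
            have hN : ((N + 1 : ℕ) : ℝ) ≠ 0 := by positivity
            field_simp
            push_cast; ring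
        _ ≤ (matPow p ((N + 1) * n) x x) ^ ((((N + 1) * n : ℕ) : ℝ)⁻¹) :=
            Real.rpow_le_rpow (by positivity) (hpow N) (by positivity)
  have := le_limsup_of_frequently_le hfreq (u_bddAbove hp0 hp1 x)
  exact lt_of_lt_of_le (Real.rpow_pos_of_pos hc _) this

lemma matPow_eventually_le (hp0 : ∀ x y, 0 ≤ p x y) (hp1 : ∀ x, ∑' y : X, p x y = 1)
    (x : X) {s : ℝ} (hs : specRad p x < s) :
    ∃ N : ℕ, ∀ n ≥ N, matPow p n x x ≤ s ^ n := by
  have hev : ∀ᶠ n in atTop, (matPow p n x x) ^ ((n : ℝ)⁻¹) < s :=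
    eventually_lt_of_limsup_lt hs (u_bddAbove hp0 hp1 x)
  rw [eventually_atTop] at hev
  obtain ⟨N, hN⟩ := hev
  refine ⟨max N 1, fun n hn => ?_⟩
  have hn1 : 1 ≤ n := le_trans (le_max_right N 1) hn
  have hne : (n : ℝ) ≠ 0 := Nat.cast_ne_zero.mpr (by omega)
  have h1 := (hN n (le_trans (le_max_left N 1) hn)).le
  calc matPow p n x x
      = ((matPow p n x x) ^ ((n : ℝ)⁻¹)) ^ n := by
        rw [← Real.rpow_natCast ((matPow p n x x) ^ ((n : ℝ)⁻¹)) n,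
          ← Real.rpow_mul (matPow_nonneg hp0 hp1 n x x), inv_mul_cancel₀ hne,
          Real.rpow_one]
    _ ≤ s ^ n := pow_le_pow_left₀ (u_nonneg hp0 hp1 x n) h1 n

end SpecAux

namespace SpecAux
variable {X : Type*} [Countable X] {p : X → X → ℝ}

lemma part_a (hp0 : ∀ x y, 0 ≤ p x y) (hp1 : ∀ x, ∑' y : X, p x y = 1) (x : X)
    {t : ℝ} {f : X → ℝ} (ht : 0 < t) (hf : ∀ z, 0 < f z)
    (hsup : ∀ z, ∑' y : X, ENNReal.ofReal (p z y * f y) ≤ ENNReal.ofReal (t * f z)) :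
    specRad p x ≤ t := by
  set G : X → ℝ≥0∞ := fun y => ENNReal.ofReal (f y) with hG
  have hsup' : ∀ z, ∑' y : X, ENNReal.ofReal (p z y) * G y ≤ ENNReal.ofReal t * G z := by
    intro z
    have h := hsup z
    rw [ENNReal.ofReal_mul ht.le] at h
    calc ∑' y : X, ENNReal.ofReal (p z y) * G y
        = ∑' y : X, ENNReal.ofReal (p z y * f y) := by
          congr 1; funext y; rw [ENNReal.ofReal_mul (hp0 z y)]
      _ ≤ ENNReal.ofReal t * G z := h
  have claim : ∀ n : ℕ, ∀ z : X,
      ∑' y : X, Q p n z y * G y ≤ (ENNReal.ofReal t) ^ n * G z := by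
    intro n
    induction n with
    | zero =>
      intro z
      have h0 : ∑' y : X, Q p 0 z y * G y = G z := by
        simp only [Q]
        rw [tsum_eq_single z]
        · simp
        · intro y hy; rw [if_neg (fun h => hy h.symm), zero_mul]
      rw [h0, pow_zero, one_mul]
    | succ n ih =>
      intro z
      calc ∑' y : X, Q p (n + 1) z y * G y
          = ∑' y : X, ∑' w : X, ENNReal.ofReal (p z w) * Q p n w y * G y := by
            simp only [Q]; congr 1; funext y; rw [ENNReal.tsum_mul_right]
        _ = ∑' w : X, ∑' y : X, ENNReal.ofReal (p z w) * Q p n w y * G y :=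
            ENNReal.tsum_comm
        _ = ∑' w : X, ENNReal.ofReal (p z w) * ∑' y : X, Q p n w y * G y := by
            congr 1; funext w; rw [← ENNReal.tsum_mul_left]
            congr 1; funext y; ring
        _ ≤ ∑' w : X, ENNReal.ofReal (p z w) * ((ENNReal.ofReal t) ^ n * G w) :=
            ENNReal.tsum_le_tsum (fun w => mul_le_mul_right (ih w) _)
        _ = (ENNReal.ofReal t) ^ n * ∑' w : X, ENNReal.ofReal (p z w) * G w := by
            rw [← ENNReal.tsum_mul_left]; congr 1; funext w; ring
        _ ≤ (ENNReal.ofReal t) ^ n * (ENNReal.ofReal t * G z) :=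
            mul_le_mul_right (hsup' z) _
        _ = (ENNReal.ofReal t) ^ (n + 1) * G z := by ring
  have hQ : ∀ n : ℕ, Q p n x x ≤ (ENNReal.ofReal t) ^ n := by
    intro n
    have h1 : Q p n x x * G x ≤ (ENNReal.ofReal t) ^ n * G x :=
      le_trans (ENNReal.le_tsum x) (claim n x)
    exact (ENNReal.mul_le_mul_iff_left (ENNReal.ofReal_pos.mpr (hf x)).ne'
      ENNReal.ofReal_ne_top).mp h1
  refine specRad_le_of_pow_le hp0 hp1 x ht (fun n _ => ?_)
  have h := hQ n
  rw [Q_eq hp0 hp1, ← ENNReal.ofReal_pow ht.le] at h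
  exact (ENNReal.ofReal_le_ofReal_iff (by positivity)).mp h

end SpecAux

namespace SpecAux
variable {X : Type*} [Countable X] {p : X → X → ℝ}

/-- The resolvent-type function `y ↦ ∑_n p^{(n)}(y,x) T^{-n}`. -/
noncomputable def FF (p : X → X → ℝ) (x : X) (T : ℝ≥0∞) (y : X) : ℝ≥0∞ :=
  ∑' n : ℕ, Q p n y x * T⁻¹ ^ n

omit [Countable X] in
lemma term_le_FF (x : X) (T : ℝ≥0∞) (y : X) (m : ℕ) :
    Q p m y x * T⁻¹ ^ m ≤ FF p x T y :=
  ENNReal.le_tsum m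

omit [Countable X] in
lemma FF_shift (x : X) (T : ℝ≥0∞) (m : ℕ) (y z : X) :
    Q p m y z * T⁻¹ ^ m * FF p x T z ≤ FF p x T y := by
  calc Q p m y z * T⁻¹ ^ m * FF p x T z
      = ∑' n : ℕ, Q p m y z * Q p n z x * (T⁻¹ ^ m * T⁻¹ ^ n) := by
        simp only [FF]
        rw [← ENNReal.tsum_mul_left]
        congr 1; funext n; ring
    _ ≤ ∑' n : ℕ, Q p (m + n) y x * T⁻¹ ^ (m + n) := by
        refine ENNReal.tsum_le_tsum fun n => ?_
        rw [← pow_add]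
        exact mul_le_mul_left (Qsub m n y z x) _
    _ ≤ FF p x T y := ENNReal.tsum_comp_le_tsum_of_injective (add_right_injective m)
        (fun n => Q p n y x * T⁻¹ ^ n)

set_option maxHeartbeats 1000000 in
lemma FF_base_fin (hp0 : ∀ x y, 0 ≤ p x y) (hp1 : ∀ x, ∑' y : X, p x y = 1)
    (x : X) {t : ℝ} (ht : specRad p x < t) :
    FF p x (ENNReal.ofReal t) x ≠ ⊤ := by
  have hρ0 : 0 ≤ specRad p x := by
    have hb := u_bddAbove hp0 hp1 x
    refine le_limsup_of_frequently_le ?_ hb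
    exact Frequently.of_forall (u_nonneg hp0 hp1 x)
  have ht0 : 0 < t := lt_of_le_of_lt hρ0 ht
  obtain ⟨s, hρs, hst⟩ := exists_between ht
  have hs0 : 0 < s := lt_of_le_of_lt hρ0 hρs
  obtain ⟨N, hN⟩ := matPow_eventually_le hp0 hp1 x hρs
  have hr1 : ENNReal.ofReal s * (ENNReal.ofReal t)⁻¹ < 1 := by
    have h : ENNReal.ofReal s * (ENNReal.ofReal t)⁻¹ = ENNReal.ofReal (s / t) := by
      rw [ENNReal.ofReal_div_of_pos ht0, div_eq_mul_inv]
    rw [h]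
    exact ENNReal.ofReal_lt_one.mpr ((div_lt_one ht0).mpr hst)
  have hgeom : (∑' n : ℕ, (ENNReal.ofReal s * (ENNReal.ofReal t)⁻¹) ^ n) ≠ ⊤ := by
    rw [ENNReal.tsum_geometric]
    exact ENNReal.inv_ne_top.mpr (tsub_pos_of_lt hr1).ne'
  have hTitop : (ENNReal.ofReal t)⁻¹ ≠ ⊤ :=
    ENNReal.inv_ne_top.mpr (ENNReal.ofReal_pos.mpr ht0).ne'
  have hsplit := Summable.tsum_add_tsum_compl (s := {n : ℕ | n < N})
    (f := fun n : ℕ => Q p n x x * (ENNReal.ofReal t)⁻¹ ^ n)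
    ENNReal.summable ENNReal.summable
  rw [FF, ← hsplit]
  refine ENNReal.add_ne_top.mpr ⟨?_, ?_⟩
  · haveI : Finite {n : ℕ | n < N} := (Set.finite_lt_nat N).to_subtype
    haveI := Fintype.ofFinite {n : ℕ | n < N}
    rw [tsum_fintype]
    refine (ENNReal.sum_lt_top.mpr fun i _ => ?_).ne
    exact ENNReal.mul_lt_top (lt_top_iff_ne_top.mpr (Q_ne_top hp0 hp1 _ x x))
      (ENNReal.pow_lt_top (lt_top_iff_ne_top.mpr hTitop))
  · refine ne_top_of_le_ne_top hgeom (le_trans (ENNReal.tsum_le_tsum fun i => ?_)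
      (ENNReal.tsum_comp_le_tsum_of_injective Subtype.val_injective
        (fun n => (ENNReal.ofReal s * (ENNReal.ofReal t)⁻¹) ^ n)))
    have hiN : N ≤ (i : ℕ) := by
      have h2 := i.2
      simp only [Set.mem_compl_iff, Set.mem_setOf_eq, not_lt] at h2
      exact h2
    have hQ : Q p (i : ℕ) x x ≤ (ENNReal.ofReal s) ^ (i : ℕ) := by
      rw [Q_eq hp0 hp1, ← ENNReal.ofReal_pow hs0.le]
      exact ENNReal.ofReal_le_ofReal (hN _ hiN)
    calc Q p (i : ℕ) x x * (ENNReal.ofReal t)⁻¹ ^ (i : ℕ)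
        ≤ (ENNReal.ofReal s) ^ (i : ℕ) * (ENNReal.ofReal t)⁻¹ ^ (i : ℕ) :=
          mul_le_mul_left hQ _
      _ = (ENNReal.ofReal s * (ENNReal.ofReal t)⁻¹) ^ (i : ℕ) := by rw [mul_pow]

lemma FF_fin (hp0 : ∀ x y, 0 ≤ p x y) (hp1 : ∀ x, ∑' y : X, p x y = 1)
    (hirr : ∀ x y, ∃ n : ℕ, 1 ≤ n ∧ 0 < matPow p n x y)
    (x : X) {t : ℝ} (ht : specRad p x < t) (ht0 : 0 < t) (y : X) :
    FF p x (ENNReal.ofReal t) y ≠ ⊤ := by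
  obtain ⟨m, _, hm⟩ := hirr x y
  have hc0 : Q p m x y ≠ 0 := by
    rw [Q_eq hp0 hp1]; exact (ENNReal.ofReal_pos.mpr hm).ne'
  have hTi0 : (ENNReal.ofReal t)⁻¹ ≠ 0 := ENNReal.inv_ne_zero.mpr ENNReal.ofReal_ne_top
  have hkey := FF_shift (p := p) x (ENNReal.ofReal t) m x y
  intro htop
  rw [htop] at hkey
  rw [ENNReal.mul_top (mul_ne_zero hc0 (pow_ne_zero m hTi0)), top_le_iff] at hkey
  exact FF_base_fin hp0 hp1 x ht hkey

lemma FF_pos (hp0 : ∀ x y, 0 ≤ p x y) (hp1 : ∀ x, ∑' y : X, p x y = 1)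
    (hirr : ∀ x y, ∃ n : ℕ, 1 ≤ n ∧ 0 < matPow p n x y)
    (x : X) {T : ℝ≥0∞} (hTtop : T ≠ ⊤) (y : X) :
    FF p x T y ≠ 0 := by
  obtain ⟨m, _, hm⟩ := hirr y x
  have hc0 : Q p m y x ≠ 0 := by
    rw [Q_eq hp0 hp1]; exact (ENNReal.ofReal_pos.mpr hm).ne'
  have h1 : Q p m y x * T⁻¹ ^ m ≠ 0 :=
    mul_ne_zero hc0 (pow_ne_zero m (ENNReal.inv_ne_zero.mpr hTtop))
  exact fun h0 => h1 (le_antisymm (h0 ▸ term_le_FF x T y m) (zero_le))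

omit [Countable X] in
lemma FF_super (x : X) {T : ℝ≥0∞} (hT0 : T ≠ 0) (hTtop : T ≠ ⊤) (z : X) :
    ∑' w : X, ENNReal.ofReal (p z w) * FF p x T w ≤ T * FF p x T z := by
  calc ∑' w : X, ENNReal.ofReal (p z w) * FF p x T w
      = ∑' w : X, ∑' n : ℕ, ENNReal.ofReal (p z w) * (Q p n w x * T⁻¹ ^ n) := by
        congr 1; funext w; rw [FF, ENNReal.tsum_mul_left]
    _ = ∑' n : ℕ, ∑' w : X, ENNReal.ofReal (p z w) * (Q p n w x * T⁻¹ ^ n) :=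
        ENNReal.tsum_comm
    _ = ∑' n : ℕ, (∑' w : X, ENNReal.ofReal (p z w) * Q p n w x) * T⁻¹ ^ n := by
        congr 1; funext n
        rw [← ENNReal.tsum_mul_right]
        congr 1; funext w; ring
    _ = ∑' n : ℕ, Q p (n + 1) z x * T⁻¹ ^ n := rfl
    _ = T * ∑' n : ℕ, Q p (n + 1) z x * T⁻¹ ^ (n + 1) := by
        rw [← ENNReal.tsum_mul_left]
        congr 1; funext n
        calc Q p (n + 1) z x * T⁻¹ ^ n
            = Q p (n + 1) z x * (T⁻¹ ^ n * (T * T⁻¹)) := by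
              rw [ENNReal.mul_inv_cancel hT0 hTtop, mul_one]
          _ = T * (Q p (n + 1) z x * (T⁻¹ ^ n * T⁻¹)) := by ring
          _ = T * (Q p (n + 1) z x * T⁻¹ ^ (n + 1)) := by rw [pow_succ]
    _ ≤ T * FF p x T z := by
        refine mul_le_mul_right ?_ _
        exact ENNReal.tsum_comp_le_tsum_of_injective (add_left_injective 1)
          (fun n => Q p n z x * T⁻¹ ^ n)

end SpecAux

section LiminfHelpers

lemma liminf_const_mul' {u : ℕ → ℝ≥0∞} {c : ℝ≥0∞} (hc : c ≠ ⊤) :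
    liminf (fun k => c * u k) atTop = c * liminf u atTop := by
  have hm : Monotone (fun a : ℝ≥0∞ => c * a) := fun a b h => mul_le_mul_right h c
  exact (hm.map_liminf_of_continuousAt u
    ((ENNReal.continuous_const_mul hc).continuousAt)).symm

lemma tsum_liminf_le' {X : Type*} [Countable X] (a : ℕ → X → ℝ≥0∞) :
    ∑' w : X, liminf (fun k => a k w) atTop ≤ liminf (fun k => ∑' w : X, a k w) atTop := by
  letI : MeasurableSpace X := ⊤
  haveI : MeasurableSingletonClass X := ⟨fun _ => MeasurableSpace.measurableSet_top⟩
  have hm : ∀ k, Measurable (a k) := fun k s _ => MeasurableSpace.measurableSet_top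
  calc ∑' w : X, liminf (fun k => a k w) atTop
      = ∫⁻ w, liminf (fun k => a k w) atTop ∂(MeasureTheory.Measure.count) :=
        (MeasureTheory.lintegral_count _).symm
    _ ≤ liminf (fun k => ∫⁻ w, a k w ∂MeasureTheory.Measure.count) atTop :=
        MeasureTheory.lintegral_liminf_le hm
    _ = liminf (fun k => ∑' w : X, a k w) atTop := by
        simp only [MeasureTheory.lintegral_count]

end LiminfHelpers

namespace SpecAux
variable {X : Type*} [Countable X] {p : X → X → ℝ}

lemma part_b_aux (hp0 : ∀ x y, 0 ≤ p x y) (hp1 : ∀ x, ∑' y : X, p x y = 1)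
    (hirr : ∀ x y, ∃ n : ℕ, 1 ≤ n ∧ 0 < matPow p n x y) (x : X)
    (T : ℕ → ℝ≥0∞) (t : ℕ → ℝ)
    (hT : ∀ k, T k = ENNReal.ofReal (t k))
    (h1 : ∀ k, specRad p x < t k)
    (h2 : ∀ k, t k ≤ specRad p x + 1)
    (h3 : ∀ s : ℝ, specRad p x < s → ∀ᶠ k in atTop, t k ≤ s) :
    ∃ f : X → ℝ, (∀ z, 0 < f z) ∧
      ∀ z, ∑' y : X, ENNReal.ofReal (p z y * f y) ≤ ENNReal.ofReal (specRad p x * f z) := by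
  have hρpos : 0 < specRad p x := specRad_pos hp0 hp1 hirr x
  have ht0 : ∀ k, 0 < t k := fun k => lt_trans hρpos (h1 k)
  have hT0 : ∀ k, T k ≠ 0 := fun k => by
    rw [hT k]; exact (ENNReal.ofReal_pos.mpr (ht0 k)).ne'
  have hTtop : ∀ k, T k ≠ ⊤ := fun k => by rw [hT k]; exact ENNReal.ofReal_ne_top
  have hTi0 : ∀ k, (T k)⁻¹ ≠ 0 := fun k => ENNReal.inv_ne_zero.mpr (hTtop k)
  have hTitop : ∀ k, (T k)⁻¹ ≠ ⊤ := fun k => ENNReal.inv_ne_top.mpr (hT0 k)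
  have hTB : ∀ k, T k ≤ ENNReal.ofReal (specRad p x + 1) := fun k => by
    rw [hT k]; exact ENNReal.ofReal_le_ofReal (h2 k)
  have hBtop : ENNReal.ofReal (specRad p x + 1) ≠ ⊤ := ENNReal.ofReal_ne_top
  have hBiTi : ∀ k, (ENNReal.ofReal (specRad p x + 1))⁻¹ ≤ (T k)⁻¹ :=
    fun k => ENNReal.inv_le_inv' (hTB k)
  have hAfin : ∀ k y, FF p x (T k) y ≠ ⊤ := fun k y => by
    rw [hT k]; exact FF_fin hp0 hp1 hirr x (h1 k) (ht0 k) y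
  have hApos : ∀ k y, FF p x (T k) y ≠ 0 := fun k y =>
    FF_pos hp0 hp1 hirr x (hTtop k) y
  have hQpos : ∀ (m : ℕ) (a b : X), 0 < matPow p m a b → Q p m a b ≠ 0 := by
    intro m a b h
    rw [Q_eq hp0 hp1]
    exact (ENNReal.ofReal_pos.mpr h).ne'
  have hdivself : ∀ k, FF p x (T k) x / FF p x (T k) x = 1 :=
    fun k => ENNReal.div_self (hApos k x) (hAfin k x)
  -- uniform upper bounds on the ratios
  have hub : ∀ y, ∃ C : ℝ≥0∞, C ≠ ⊤ ∧
      ∀ k, FF p x (T k) y / FF p x (T k) x ≤ C := by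
    intro y
    obtain ⟨m, _, hm⟩ := hirr x y
    have hc0 : Q p m x y ≠ 0 := hQpos m x y hm
    have hctop : Q p m x y ≠ ⊤ := Q_ne_top hp0 hp1 m x y
    refine ⟨(Q p m x y)⁻¹ * (ENNReal.ofReal (specRad p x + 1)) ^ m,
      ENNReal.mul_ne_top (ENNReal.inv_ne_top.mpr hc0) (ENNReal.pow_ne_top hBtop),
      fun k => ?_⟩
    refine ENNReal.div_le_of_le_mul ?_
    have hkey := FF_shift (p := p) x (T k) m x y
    calc FF p x (T k) y
        = ((Q p m x y)⁻¹ * (((T k)⁻¹ ^ m)⁻¹)) *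
            (Q p m x y * (T k)⁻¹ ^ m * FF p x (T k) y) := by
          have hq : (Q p m x y)⁻¹ * Q p m x y = 1 := ENNReal.inv_mul_cancel hc0 hctop
          have hp' : ((T k)⁻¹ ^ m)⁻¹ * (T k)⁻¹ ^ m = 1 :=
            ENNReal.inv_mul_cancel (pow_ne_zero m (hTi0 k)) (ENNReal.pow_ne_top (hTitop k))
          calc FF p x (T k) y
              = ((Q p m x y)⁻¹ * Q p m x y) *
                ((((T k)⁻¹ ^ m)⁻¹ * (T k)⁻¹ ^ m) * FF p x (T k) y) := by
                rw [hq, hp', one_mul, one_mul]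
            _ = ((Q p m x y)⁻¹ * (((T k)⁻¹ ^ m)⁻¹)) *
                (Q p m x y * (T k)⁻¹ ^ m * FF p x (T k) y) := by ring
      _ ≤ ((Q p m x y)⁻¹ * (((T k)⁻¹ ^ m)⁻¹)) * FF p x (T k) x :=
          mul_le_mul_right hkey _
      _ ≤ ((Q p m x y)⁻¹ * (ENNReal.ofReal (specRad p x + 1)) ^ m) * FF p x (T k) x := by
          refine mul_le_mul_left (mul_le_mul_right ?_ _) _
          rw [ENNReal.inv_pow, inv_inv]
          exact pow_le_pow_left' (hTB k) m
  -- uniform lower bounds on the ratios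
  have hlb : ∀ y, ∃ d : ℝ≥0∞, d ≠ 0 ∧
      ∀ k, d ≤ FF p x (T k) y / FF p x (T k) x := by
    intro y
    obtain ⟨m, _, hm⟩ := hirr y x
    have hc0 : Q p m y x ≠ 0 := hQpos m y x hm
    refine ⟨Q p m y x * ((ENNReal.ofReal (specRad p x + 1))⁻¹) ^ m,
      mul_ne_zero hc0 (pow_ne_zero m (ENNReal.inv_ne_zero.mpr hBtop)), fun k => ?_⟩
    have hkey := FF_shift (p := p) x (T k) m y x
    calc Q p m y x * ((ENNReal.ofReal (specRad p x + 1))⁻¹) ^ m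
        = Q p m y x * ((ENNReal.ofReal (specRad p x + 1))⁻¹) ^ m *
            (FF p x (T k) x / FF p x (T k) x) := by rw [hdivself k, mul_one]
      _ ≤ Q p m y x * (T k)⁻¹ ^ m * (FF p x (T k) x / FF p x (T k) x) :=
          mul_le_mul_left (mul_le_mul_right (pow_le_pow_left' (hBiTi k) m) _) _
      _ = (Q p m y x * (T k)⁻¹ ^ m * FF p x (T k) x) / FF p x (T k) x := by
          rw [mul_div_assoc]
      _ ≤ FF p x (T k) y / FF p x (T k) x := ENNReal.div_le_div_right hkey _
  -- the candidate function
  set g : X → ℝ≥0∞ :=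
    fun y => liminf (fun k => FF p x (T k) y / FF p x (T k) x) atTop with hgdef
  have hgpos : ∀ y, g y ≠ 0 := by
    intro y
    obtain ⟨d, hd0, hd⟩ := hlb y
    have hle : d ≤ g y := le_liminf_of_le (by isBoundedDefault) (Eventually.of_forall hd)
    exact fun h => hd0 (le_antisymm (h ▸ hle) (zero_le))
  have hgtop : ∀ y, g y ≠ ⊤ := by
    intro y
    obtain ⟨C, hCtop, hC⟩ := hub y
    have hle : g y ≤ C := by
      have h1' : g y ≤ liminf (fun _ : ℕ => C) atTop :=
        liminf_le_liminf (Eventually.of_forall hC)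
      rwa [liminf_const] at h1'
    exact ne_top_of_le_ne_top hCtop hle
  -- superharmonicity at each level
  have hksup : ∀ k (z : X),
      ∑' w : X, ENNReal.ofReal (p z w) * (FF p x (T k) w / FF p x (T k) x)
        ≤ T k * (FF p x (T k) z / FF p x (T k) x) := by
    intro k z
    calc ∑' w : X, ENNReal.ofReal (p z w) * (FF p x (T k) w / FF p x (T k) x)
        = (∑' w : X, ENNReal.ofReal (p z w) * FF p x (T k) w) * (FF p x (T k) x)⁻¹ := by
          rw [← ENNReal.tsum_mul_right]
          congr 1; funext w; rw [div_eq_mul_inv, mul_assoc]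
      _ ≤ T k * FF p x (T k) z * (FF p x (T k) x)⁻¹ :=
          mul_le_mul_left (FF_super x (hT0 k) (hTtop k) z) _
      _ = T k * (FF p x (T k) z / FF p x (T k) x) := by
          rw [div_eq_mul_inv, mul_assoc]
  -- superharmonicity of g
  have hgsup : ∀ z : X, ∑' w : X, ENNReal.ofReal (p z w) * g w
      ≤ ENNReal.ofReal (specRad p x) * g z := by
    intro z
    have step1 : ∑' w : X, ENNReal.ofReal (p z w) * g w
        ≤ liminf (fun k => ∑' w : X,
            ENNReal.ofReal (p z w) * (FF p x (T k) w / FF p x (T k) x)) atTop := by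
      refine le_trans (le_of_eq ?_) (tsum_liminf_le'
        (fun k w => ENNReal.ofReal (p z w) * (FF p x (T k) w / FF p x (T k) x)))
      congr 1; funext w
      exact (liminf_const_mul' ENNReal.ofReal_ne_top).symm
    have step2 : ∀ s : ℝ, specRad p x < s →
        liminf (fun k => ∑' w : X,
            ENNReal.ofReal (p z w) * (FF p x (T k) w / FF p x (T k) x)) atTop
          ≤ ENNReal.ofReal s * g z := by
      intro s hs
      have hle : liminf (fun k => ∑' w : X,
          ENNReal.ofReal (p z w) * (FF p x (T k) w / FF p x (T k) x)) atTop
          ≤ liminf (fun k => ENNReal.ofReal s *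
              (FF p x (T k) z / FF p x (T k) x)) atTop := by
        refine liminf_le_liminf ?_
        filter_upwards [h3 s hs] with k hk
        refine le_trans (hksup k z) (mul_le_mul_left ?_ _)
        rw [hT k]
        exact ENNReal.ofReal_le_ofReal hk
      rwa [liminf_const_mul' ENNReal.ofReal_ne_top] at hle
    have step3 : ∀ s : ℝ, specRad p x < s → ∑' w : X, ENNReal.ofReal (p z w) * g w
        ≤ ENNReal.ofReal s * g z := fun s hs => le_trans step1 (step2 s hs)
    refine ENNReal.le_of_forall_pos_le_add fun ε hε _ => ?_
    obtain ⟨G, hG0, hGeq⟩ : ∃ G : ℝ, 0 ≤ G ∧ g z = ENNReal.ofReal G :=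
      ⟨(g z).toReal, ENNReal.toReal_nonneg, (ENNReal.ofReal_toReal (hgtop z)).symm⟩
    have hδ0 : (0:ℝ) < (ε : ℝ) / (G + 1) := by positivity
    have hδG : (ε : ℝ) / (G + 1) * G ≤ (ε : ℝ) := by
      rw [div_mul_eq_mul_div, div_le_iff₀ (by positivity)]
      have hε0 : (0 : ℝ) ≤ (ε : ℝ) := ε.2
      nlinarith
    calc ∑' w : X, ENNReal.ofReal (p z w) * g w
        ≤ ENNReal.ofReal (specRad p x + (ε : ℝ) / (G + 1)) * g z :=
          step3 _ (by linarith)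
      _ = ENNReal.ofReal (specRad p x) * g z
            + ENNReal.ofReal ((ε : ℝ) / (G + 1)) * g z := by
          rw [ENNReal.ofReal_add hρpos.le hδ0.le, add_mul]
      _ ≤ ENNReal.ofReal (specRad p x) * g z + ε := by
          refine add_le_add_right ?_ _
          rw [hGeq, ← ENNReal.ofReal_mul hδ0.le]
          calc ENNReal.ofReal ((ε : ℝ) / (G + 1) * G)
              ≤ ENNReal.ofReal (ε : ℝ) := ENNReal.ofReal_le_ofReal hδG
            _ = (ε : ℝ≥0∞) := ENNReal.ofReal_coe_nnreal
  -- conclude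
  refine ⟨fun y => (g y).toReal,
    fun y => ENNReal.toReal_pos (hgpos y) (hgtop y), fun z => ?_⟩
  calc ∑' w : X, ENNReal.ofReal (p z w * (g w).toReal)
      = ∑' w : X, ENNReal.ofReal (p z w) * g w := by
        congr 1; funext w
        rw [ENNReal.ofReal_mul (hp0 z w), ENNReal.ofReal_toReal (hgtop w)]
    _ ≤ ENNReal.ofReal (specRad p x) * g z := hgsup z
    _ = ENNReal.ofReal (specRad p x * (g z).toReal) := by
        rw [ENNReal.ofReal_mul hρpos.le, ENNReal.ofReal_toReal (hgtop z)]

lemma part_b (hp0 : ∀ x y, 0 ≤ p x y) (hp1 : ∀ x, ∑' y : X, p x y = 1)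
    (hirr : ∀ x y, ∃ n : ℕ, 1 ≤ n ∧ 0 < matPow p n x y) (x : X) :
    ∃ f : X → ℝ, (∀ z, 0 < f z) ∧
      ∀ z, ∑' y : X, ENNReal.ofReal (p z y * f y) ≤ ENNReal.ofReal (specRad p x * f z) := by
  refine part_b_aux hp0 hp1 hirr x
    (fun k => ENNReal.ofReal (specRad p x + 1 / ((k : ℝ) + 1)))
    (fun k => specRad p x + 1 / ((k : ℝ) + 1)) (fun k => rfl) ?_ ?_ ?_
  · intro k
    have : (0:ℝ) < 1 / ((k : ℝ) + 1) := by positivity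
    linarith
  · intro k
    have h1 : (1:ℝ) / ((k : ℝ) + 1) ≤ 1 := by
      rw [div_le_one (by positivity)]
      have : (0:ℝ) ≤ (k : ℝ) := Nat.cast_nonneg k
      linarith
    linarith
  · intro s hs
    obtain ⟨N, hN⟩ := exists_nat_one_div_lt (show (0:ℝ) < s - specRad p x by linarith)
    filter_upwards [eventually_ge_atTop N] with k hk
    have h1 : (1:ℝ) / ((k : ℝ) + 1) ≤ 1 / ((N : ℝ) + 1) := by
      apply one_div_le_one_div_of_le (by positivity)
      have : (N : ℝ) ≤ (k : ℝ) := Nat.cast_le.mpr hk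
      linarith
    have h2 : (1:ℝ) / ((N : ℝ) + 1) < s - specRad p x := hN
    linarith

end SpecAux

/-- `ρ(P) = min{ t > 0 : ∃ f > 0 with P f ≤ t f }` for an irreducible
stochastic matrix `P`.  (a) any `t > 0` admitting a positive `t`-superharmonic function
satisfies `ρ(P) ≤ t`; (b) there is a positive `ρ(P)`-superharmonic function.
(The sums `∑_y p(x,y) f(y)` are computed in `[0,∞]` via `ENNReal.ofReal` of the
nonnegative summands, so no separate summability assumption is needed.) -/
theorem spectral_radius_superharmonic_characterization {X : Type*} [Countable X]
    (p : X → X → ℝ)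
    (hp0 : ∀ x y, 0 ≤ p x y) (hp1 : ∀ x, ∑' y : X, p x y = 1)
    (hirr : ∀ x y, ∃ n : ℕ, 1 ≤ n ∧ 0 < matPow p n x y) (x : X) :
    (∀ t : ℝ, 0 < t →
      (∃ f : X → ℝ, (∀ z, 0 < f z) ∧
        ∀ z, ∑' y : X, ENNReal.ofReal (p z y * f y) ≤ ENNReal.ofReal (t * f z)) →
      specRad p x ≤ t) ∧
    (∃ f : X → ℝ, (∀ z, 0 < f z) ∧
      ∀ z, ∑' y : X, ENNReal.ofReal (p z y * f y) ≤ ENNReal.ofReal (specRad p x * f z)) := by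
  constructor
  · rintro t ht ⟨f, hf, hsup⟩
    exact SpecAux.part_a hp0 hp1 x ht hf hsup
  · exact SpecAux.part_b hp0 hp1 hirr x
end

section
/- Let P be an irreducible stochastic matrix on a countable infinite set X and let m : X → [1,∞) with m(y) > 1 for some y ∈ X. Then the following are equivalent: (i) L_m(x,x) ≤ 1 for some x ∈ X; (i') L_m(x,x) ≤ 1 for all x ∈ X; (ii) L_m(x,x₀) < ∞ for all x,x₀ ∈ X; (iii) there exists a strictly positive function f : X → (0,∞) such that m(x)·∑_y p(x,y) f(y) ≤ f(x) for all x ∈ X. (Each condition characterizes transience of the branching Markov chain (X,P,μ) with mean offspring m.) -/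
open scoped Classical ENNReal
open Filter

/-- `pathSum p m x₀ n x` is the sum, over all paths `x = y_0, y_1, …, y_{n+1} = x₀`
of length `n+1` with `y_i ≠ x₀` for `1 ≤ i ≤ n`, of `∏_i m(y_i)·p(y_i,y_{i+1})`,
computed in `[0,∞]`. -/
noncomputable def pathSum {X : Type*} (p : X → X → ℝ) (m : X → ℝ) (x₀ : X) : ℕ → X → ℝ≥0∞
  | 0 => fun x => ENNReal.ofReal (m x * p x x₀)
  | n + 1 => fun x =>
      ∑' y : {y : X // y ≠ x₀}, ENNReal.ofReal (m x * p x y.1) * pathSum p m x₀ n y.1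

/-- The weighted first-passage sum
`L_m(x,x₀) = ∑_{n≥1} ∑_{paths of length n from x to x₀ avoiding x₀ in between}
∏ m(y_i) p(y_i,y_{i+1}) ∈ [0,∞]`.  It equals `E_x ν(x₀)`, the expected number of
particles of the branching Markov chain ever frozen at `x₀`. -/
noncomputable def Lsum {X : Type*} (p : X → X → ℝ) (m : X → ℝ) (x x₀ : X) : ℝ≥0∞ :=
  ∑' n : ℕ, pathSum p m x₀ n x

section helpers
variable {X : Type*} (p : X → X → ℝ) (m : X → ℝ)

/-- tsum over the subtype `{y // y ≠ x₀}` rewritten as an `ite`-tsum over `X`. -/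
lemma tsum_ne_eq (x₀ : X) (g : X → ℝ≥0∞) :
    ∑' y : {y : X // y ≠ x₀}, g y.1 = ∑' y : X, if y = x₀ then 0 else g y := by
  exact (tsum_subtype {y : X | y ≠ x₀} g).trans
    (tsum_congr fun y => by by_cases h : y = x₀ <;> simp [Set.indicator, h])

lemma pathSum_succ (x₀ : X) (n : ℕ) (x : X) :
    pathSum p m x₀ (n+1) x
      = ∑' y : X, if y = x₀ then 0
          else ENNReal.ofReal (m x * p x y) * pathSum p m x₀ n y := by
  rw [pathSum]
  exact tsum_ne_eq x₀ fun y => ENNReal.ofReal (m x * p x y) * pathSum p m x₀ n y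

/-- first-step recursion for `Lsum`. -/
lemma Lsum_rec (x₀ x : X) :
    Lsum p m x x₀ = ENNReal.ofReal (m x * p x x₀)
      + ∑' y : X, if y = x₀ then 0
          else ENNReal.ofReal (m x * p x y) * Lsum p m y x₀ := by
  have h2 : ∑' n : ℕ, pathSum p m x₀ (n+1) x
      = ∑' y : X, if y = x₀ then 0
          else ENNReal.ofReal (m x * p x y) * Lsum p m y x₀ := by
    calc ∑' n : ℕ, pathSum p m x₀ (n+1) x
        = ∑' (n : ℕ) (y : X), (if y = x₀ then 0
            else ENNReal.ofReal (m x * p x y) * pathSum p m x₀ n y) :=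
          tsum_congr fun n => pathSum_succ p m x₀ n x
      _ = ∑' (y : X) (n : ℕ), (if y = x₀ then 0
            else ENNReal.ofReal (m x * p x y) * pathSum p m x₀ n y) := ENNReal.tsum_comm
      _ = _ := by
          refine tsum_congr fun y => ?_
          by_cases h : y = x₀
          · simp [h]
          · simp only [h, if_false, ENNReal.tsum_mul_left]; rfl
  rw [Lsum, tsum_eq_zero_add' ENNReal.summable, h2]; rfl


variable {X : Type*} {p : X → X → ℝ} {m : X → ℝ}

lemma matPow_nonneg (hp0 : ∀ x y, 0 ≤ p x y) : ∀ n x y, 0 ≤ matPow p n x y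
  | 0, x, y => by rw [matPow]; positivity
  | n+1, x, y => by
      rw [matPow]
      exact tsum_nonneg fun z => mul_nonneg (hp0 x z) (matPow_nonneg hp0 n z y)

lemma matPow_pos_succ (hp0 : ∀ x y, 0 ≤ p x y) {n : ℕ} {x y : X}
    (h : 0 < matPow p (n+1) x y) : ∃ z, 0 < p x z ∧ 0 < matPow p n z y := by
  by_contra hc
  push_neg at hc
  have hz : ∀ z, p x z * matPow p n z y = 0 := by
    intro z
    rcases lt_or_eq_of_le (hp0 x z) with h1 | h1
    · have := hc z h1
      exact mul_eq_zero_of_right _ (le_antisymm this (matPow_nonneg hp0 n z y))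
    · rw [← h1, zero_mul]
  rw [matPow] at h
  simp only [hz, tsum_zero] at h
  exact lt_irrefl 0 h

lemma matPow_one (x y : X) : matPow p 1 x y = p x y := by
  show ∑' z : X, p x z * matPow p 0 z y = p x y
  rw [tsum_eq_single y]
  · simp [matPow]
  · intro z hz; simp [matPow, hz]

lemma le_Lsum (k : ℕ) (x x₀ : X) : pathSum p m x₀ k x ≤ Lsum p m x x₀ :=
  ENNReal.le_tsum k

lemma Lsum_pos (hp0 : ∀ x y, 0 ≤ p x y) (hm1 : ∀ x, 1 ≤ m x)
    (hirr : ∀ x y, ∃ n : ℕ, 1 ≤ n ∧ 0 < matPow p n x y) (x x₀ : X) :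
    0 < Lsum p m x x₀ := by
  have base : ∀ x : X, 0 < p x x₀ → 0 < Lsum p m x x₀ := by
    intro x hx
    refine lt_of_lt_of_le ?_ (le_Lsum 0 x x₀)
    rw [pathSum]
    exact ENNReal.ofReal_pos.mpr (mul_pos (lt_of_lt_of_le one_pos (hm1 x)) hx)
  have main : ∀ n : ℕ, ∀ x : X, 0 < matPow p (n+1) x x₀ → 0 < Lsum p m x x₀ := by
    intro n
    induction n with
    | zero => intro x hx; rw [matPow_one] at hx; exact base x hx
    | succ n ih =>
        intro x hx
        obtain ⟨z, hz1, hz2⟩ := matPow_pos_succ hp0 hx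
        by_cases hza : z = x₀
        · exact base x (hza ▸ hz1)
        · have hLz := ih z hz2
          have : ∃ k, pathSum p m x₀ k z ≠ 0 := by
            by_contra hc
            push_neg at hc
            rw [Lsum] at hLz
            simp [hc] at hLz
          obtain ⟨k, hk⟩ := this
          refine lt_of_lt_of_le ?_ (le_Lsum (k+1) x x₀)
          rw [pathSum_succ]
          refine lt_of_lt_of_le ?_ (ENNReal.le_tsum z)
          simp only [hza, if_false]
          exact ENNReal.mul_pos
            (ne_of_gt (ENNReal.ofReal_pos.mpr
              (mul_pos (lt_of_lt_of_le one_pos (hm1 x)) hz1))) hk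
  obtain ⟨n, hn1, hn⟩ := hirr x x₀
  obtain ⟨k, rfl⟩ := Nat.exists_eq_add_of_le hn1
  exact main k x (by rwa [add_comm] at hn)

lemma Lsum_ne_top_all (hp0 : ∀ x y, 0 ≤ p x y) (hm1 : ∀ x, 1 ≤ m x)
    (hirr : ∀ x y, ∃ n : ℕ, 1 ≤ n ∧ 0 < matPow p n x y) {a : X}
    (ha : Lsum p m a a ≠ ⊤) (x : X) : Lsum p m x a ≠ ⊤ := by
  have hstep : ∀ x : X, Lsum p m x a ≠ ⊤ → ∀ z, 0 < p x z → z ≠ a → Lsum p m z a ≠ ⊤ := by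
    intro x hx z hpz hza htop
    apply hx
    rw [Lsum_rec p m a x]
    rw [eq_top_iff]
    calc (⊤ : ℝ≥0∞) = ENNReal.ofReal (m x * p x z) * Lsum p m z a := by
          rw [htop, ENNReal.mul_top]
          exact ne_of_gt (ENNReal.ofReal_pos.mpr
            (mul_pos (lt_of_lt_of_le one_pos (hm1 x)) hpz))
      _ ≤ ∑' y : X, if y = a then 0
            else ENNReal.ofReal (m x * p x y) * Lsum p m y a := by
          refine le_trans (le_of_eq ?_) (ENNReal.le_tsum z)
          simp [hza]
      _ ≤ _ := le_add_self
  have main : ∀ n : ℕ, ∀ x : X, Lsum p m x a ≠ ⊤ → ∀ y, 0 < matPow p n x y →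
      Lsum p m y a ≠ ⊤ := by
    intro n
    induction n with
    | zero =>
        intro x hx y hy
        rw [matPow] at hy
        by_cases h : x = y
        · exact h ▸ hx
        · simp [h] at hy
    | succ n ih =>
        intro x hx y hy
        obtain ⟨z, hz1, hz2⟩ := matPow_pos_succ hp0 hy
        by_cases hza : z = a
        · exact ih a ha y (hza ▸ hz2)
        · exact ih z (hstep x hx z hz1 hza) y hz2
  obtain ⟨n, _, hn⟩ := hirr a x
  exact main n a ha x hn


variable {X : Type*} {p : X → X → ℝ} {m : X → ℝ}

lemma exists_superharmonic (hp0 : ∀ x y, 0 ≤ p x y) (hm1 : ∀ x, 1 ≤ m x)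
    (hirr : ∀ x y, ∃ n : ℕ, 1 ≤ n ∧ 0 < matPow p n x y) {a : X}
    (ha : Lsum p m a a ≤ 1) :
    ∃ f : X → ℝ, (∀ x, 0 < f x) ∧
      ∀ x, ENNReal.ofReal (m x) * ∑' y : X, ENNReal.ofReal (p x y * f y) ≤
        ENNReal.ofReal (f x) := by
  have hm0 : ∀ x, 0 ≤ m x := fun x => le_trans zero_le_one (hm1 x)
  have hfin : ∀ x, Lsum p m x a ≠ ⊤ :=
    Lsum_ne_top_all hp0 hm1 hirr (ne_top_of_le_ne_top ENNReal.one_ne_top ha)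
  have hpos : ∀ x, 0 < Lsum p m x a := fun x => Lsum_pos hp0 hm1 hirr x a
  set f : X → ℝ := fun x => if x = a then 1 else (Lsum p m x a).toReal with hf
  have hfa : f a = 1 := if_pos rfl
  have hfpos : ∀ x, 0 < f x := by
    intro x
    by_cases h : x = a
    · simp [hf, h]
    · simp only [hf, h, if_false]
      exact ENNReal.toReal_pos (ne_of_gt (hpos x)) (hfin x)
  have hofr : ∀ y, y ≠ a → ENNReal.ofReal (f y) = Lsum p m y a := by
    intro y h
    simp only [hf, h, if_false]
    exact ENNReal.ofReal_toReal (hfin y)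
  refine ⟨f, hfpos, fun x => ?_⟩
  have key : ENNReal.ofReal (m x) * ∑' y : X, ENNReal.ofReal (p x y * f y)
      = Lsum p m x a := by
    rw [ENNReal.tsum_eq_add_tsum_ite a, Lsum_rec p m a x, mul_add]
    congr 1
    · rw [hfa, mul_one, ← ENNReal.ofReal_mul (hm0 x)]
    · rw [← ENNReal.tsum_mul_left]
      refine tsum_congr fun y => ?_
      by_cases h : y = a
      · simp [h]
      · simp only [h, if_false]
        rw [ENNReal.ofReal_mul (hp0 x y), ENNReal.ofReal_mul (hm0 x), mul_assoc,
          hofr y h]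
  rw [key]
  by_cases h : x = a
  · subst h
    rw [hfa, ENNReal.ofReal_one]
    exact ha
  · rw [hofr x h]

lemma superharmonic_partial_bound {f : X → ℝ} (hp0 : ∀ x y, 0 ≤ p x y)
    (hm0 : ∀ x, 0 ≤ m x) (hfpos : ∀ x, 0 < f x)
    (hsup : ∀ x, ENNReal.ofReal (m x) * ∑' y : X, ENNReal.ofReal (p x y * f y) ≤
        ENNReal.ofReal (f x)) (x₀ : X) :
    ∀ N x, (∑ n ∈ Finset.range N, pathSum p m x₀ n x) * ENNReal.ofReal (f x₀)
      ≤ ENNReal.ofReal (f x) := by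
  intro N
  induction N with
  | zero => intro x; simp
  | succ N ih =>
      intro x
      rw [Finset.sum_range_succ']
      have hps : ∀ n, pathSum p m x₀ (n+1) x
          = ∑' y : X, if y = x₀ then 0
              else ENNReal.ofReal (m x * p x y) * pathSum p m x₀ n y :=
        fun n => pathSum_succ p m x₀ n x
      calc ((∑ n ∈ Finset.range N, pathSum p m x₀ (n+1) x) + pathSum p m x₀ 0 x)
            * ENNReal.ofReal (f x₀)
          = (∑' y : X, ∑ n ∈ Finset.range N, if y = x₀ then 0
              else ENNReal.ofReal (m x * p x y) * pathSum p m x₀ n y)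
              * ENNReal.ofReal (f x₀)
            + ENNReal.ofReal (m x * p x x₀) * ENNReal.ofReal (f x₀) := by
            have h1 : (∑ n ∈ Finset.range N, pathSum p m x₀ (n+1) x)
                = ∑' y : X, ∑ n ∈ Finset.range N, if y = x₀ then 0
                    else ENNReal.ofReal (m x * p x y) * pathSum p m x₀ n y := by
              rw [Finset.sum_congr rfl fun n _ => hps n]
              exact (Summable.tsum_finsetSum fun i _ => ENNReal.summable).symm
            rw [add_mul, h1]
            rfl
        _ = (∑' y : X, (∑ n ∈ Finset.range N, if y = x₀ then 0
              else ENNReal.ofReal (m x * p x y) * pathSum p m x₀ n y)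
              * ENNReal.ofReal (f x₀))
            + ENNReal.ofReal (m x * p x x₀) * ENNReal.ofReal (f x₀) := by
            rw [ENNReal.tsum_mul_right]
        _ ≤ (∑' y : X, if y = x₀ then 0
              else ENNReal.ofReal (m x * p x y) * ENNReal.ofReal (f y))
            + ENNReal.ofReal (m x * p x x₀) * ENNReal.ofReal (f x₀) := by
            refine add_le_add_left (ENNReal.tsum_le_tsum fun y => ?_) _
            by_cases h : y = x₀
            · simp [h]
            · simp only [h, if_false]
              rw [← Finset.mul_sum, mul_assoc]
              exact mul_le_mul_right (ih y) _
        _ = ENNReal.ofReal (m x) * ∑' y : X, ENNReal.ofReal (p x y * f y) := by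
            have hsplit : ∑' y : X, ENNReal.ofReal (p x y * f y)
                = ENNReal.ofReal (p x x₀ * f x₀)
                  + ∑' y : X, if y = x₀ then 0 else ENNReal.ofReal (p x y * f y) :=
              ENNReal.tsum_eq_add_tsum_ite x₀
            have hterm : ENNReal.ofReal (m x * p x x₀) * ENNReal.ofReal (f x₀)
                = ENNReal.ofReal (m x) * ENNReal.ofReal (p x x₀ * f x₀) := by
              rw [ENNReal.ofReal_mul (hp0 x x₀), ENNReal.ofReal_mul (hm0 x), mul_assoc]
            have htsum : (∑' y : X, if y = x₀ then 0
                  else ENNReal.ofReal (m x * p x y) * ENNReal.ofReal (f y))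
                = ENNReal.ofReal (m x) * ∑' y : X, if y = x₀ then 0
                    else ENNReal.ofReal (p x y * f y) := by
              rw [← ENNReal.tsum_mul_left]
              refine tsum_congr fun y => ?_
              by_cases h : y = x₀
              · simp [h]
              · simp only [h, if_false]
                rw [ENNReal.ofReal_mul (hm0 x), ENNReal.ofReal_mul (hp0 x y), mul_assoc]
            rw [hsplit, mul_add, ← hterm, ← htsum]
            exact add_comm _ _
        _ ≤ ENNReal.ofReal (f x) := hsup x

lemma superharmonic_Lsum_bound {f : X → ℝ} (hp0 : ∀ x y, 0 ≤ p x y)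
    (hm0 : ∀ x, 0 ≤ m x) (hfpos : ∀ x, 0 < f x)
    (hsup : ∀ x, ENNReal.ofReal (m x) * ∑' y : X, ENNReal.ofReal (p x y * f y) ≤
        ENNReal.ofReal (f x)) (x x₀ : X) :
    Lsum p m x x₀ * ENNReal.ofReal (f x₀) ≤ ENNReal.ofReal (f x) := by
  rw [Lsum, ENNReal.tsum_eq_iSup_nat, ENNReal.iSup_mul]
  exact iSup_le fun N => superharmonic_partial_bound hp0 hm0 hfpos hsup x₀ N x

lemma superharmonic_lt_top {f : X → ℝ} (hp0 : ∀ x y, 0 ≤ p x y)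
    (hm0 : ∀ x, 0 ≤ m x) (hfpos : ∀ x, 0 < f x)
    (hsup : ∀ x, ENNReal.ofReal (m x) * ∑' y : X, ENNReal.ofReal (p x y * f y) ≤
        ENNReal.ofReal (f x)) (x x₀ : X) : Lsum p m x x₀ < ⊤ := by
  have h := superharmonic_Lsum_bound hp0 hm0 hfpos hsup x x₀
  by_contra hc
  push_neg at hc
  rw [top_le_iff] at hc
  rw [hc, ENNReal.top_mul (ne_of_gt (ENNReal.ofReal_pos.mpr (hfpos x₀))),
    top_le_iff] at h
  exact ENNReal.ofReal_ne_top h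

lemma superharmonic_le_one {f : X → ℝ} (hp0 : ∀ x y, 0 ≤ p x y)
    (hm0 : ∀ x, 0 ≤ m x) (hfpos : ∀ x, 0 < f x)
    (hsup : ∀ x, ENNReal.ofReal (m x) * ∑' y : X, ENNReal.ofReal (p x y * f y) ≤
        ENNReal.ofReal (f x)) (x : X) : Lsum p m x x ≤ 1 := by
  have h := superharmonic_Lsum_bound hp0 hm0 hfpos hsup x x
  exact (ENNReal.mul_le_mul_iff_left (ne_of_gt (ENNReal.ofReal_pos.mpr (hfpos x)))
    ENNReal.ofReal_ne_top).mp (by rw [one_mul]; exact h)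

/-- Restricted path sums: interior vertices restricted to the finite set `F`. -/
noncomputable def resSum {X : Type*} (p : X → X → ℝ) (m : X → ℝ) (F : Finset X)
    (x₀ : X) : ℕ → X → ℝ≥0∞
  | 0 => fun x => ENNReal.ofReal (m x * p x x₀)
  | n + 1 => fun x =>
      ∑ y ∈ F, if y = x₀ then 0 else ENNReal.ofReal (m x * p x y) * resSum p m F x₀ n y


lemma resSum_mono {F G : Finset X} (hFG : F ⊆ G) (x₀ : X) :
    ∀ n x, resSum p m F x₀ n x ≤ resSum p m G x₀ n x := by
  intro n
  induction n with
  | zero => intro x; exact le_refl _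
  | succ n ih =>
      intro x
      rw [resSum, resSum]
      refine le_trans (Finset.sum_le_sum fun y _ => ?_) (Finset.sum_le_sum_of_subset hFG)
      by_cases h : y = x₀
      · simp [h]
      · simp only [h, if_false]
        exact mul_le_mul_right (ih y) _

lemma resSum_le_pathSum (F : Finset X) (x₀ : X) :
    ∀ n x, resSum p m F x₀ n x ≤ pathSum p m x₀ n x := by
  intro n
  induction n with
  | zero => intro x; exact le_refl _
  | succ n ih =>
      intro x
      rw [resSum, pathSum_succ]
      refine le_trans (Finset.sum_le_sum fun y _ => ?_) (ENNReal.sum_le_tsum F)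
      by_cases h : y = x₀
      · simp [h]
      · simp only [h, if_false]
        exact mul_le_mul_right (ih y) _

lemma pathSum_eq_iSup_resSum (x₀ : X) :
    ∀ n x, pathSum p m x₀ n x = ⨆ F : Finset X, resSum p m F x₀ n x := by
  intro n
  induction n with
  | zero =>
      intro x
      rw [show (⨆ F : Finset X, resSum p m F x₀ 0 x)
        = ⨆ _ : Finset X, ENNReal.ofReal (m x * p x x₀) from rfl, iSup_const]
      rfl
  | succ n ih =>
      intro x
      refine le_antisymm ?_ (iSup_le fun F => resSum_le_pathSum F x₀ (n+1) x)
      rw [pathSum_succ, ENNReal.tsum_eq_iSup_sum]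
      refine iSup_le fun G => ?_
      have hpt : ∀ y : X, (if y = x₀ then 0
          else ENNReal.ofReal (m x * p x y) * pathSum p m x₀ n y)
          = ⨆ F : Finset X, (if y = x₀ then 0
            else ENNReal.ofReal (m x * p x y) * resSum p m F x₀ n y) := by
        intro y
        by_cases h : y = x₀
        · simp [h]
        · simp only [h, if_false]
          rw [ih y, ENNReal.mul_iSup]
      calc ∑ y ∈ G, (if y = x₀ then 0
            else ENNReal.ofReal (m x * p x y) * pathSum p m x₀ n y)
          = ∑ y ∈ G, ⨆ F : Finset X, (if y = x₀ then 0
              else ENNReal.ofReal (m x * p x y) * resSum p m F x₀ n y) :=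
            Finset.sum_congr rfl fun y _ => hpt y
        _ = ⨆ F : Finset X, ∑ y ∈ G, (if y = x₀ then 0
              else ENNReal.ofReal (m x * p x y) * resSum p m F x₀ n y) := by
            refine ENNReal.finsetSum_iSup_of_monotone fun y F G hFG => ?_
            by_cases h : y = x₀
            · simp [h]
            · simp only [h, if_false]
              exact mul_le_mul_right (resSum_mono hFG x₀ n y) _
        _ ≤ ⨆ F : Finset X, resSum p m F x₀ (n+1) x := by
            refine iSup_le fun F => le_iSup_of_le (F ∪ G) ?_
            rw [resSum]
            refine le_trans (Finset.sum_le_sum fun y _ => ?_)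
              (Finset.sum_le_sum_of_subset Finset.subset_union_right)
            by_cases h : y = x₀
            · simp [h]
            · simp only [h, if_false]
              exact mul_le_mul_right
                (resSum_mono Finset.subset_union_left x₀ n y) _

/-- Key first-return inequality: prepending restricted loops at `x`. -/
lemma resSum_loop_bound {x x₀ : X} (hx : x ≠ x₀) {F : Finset X} (hF : x₀ ∉ F) :
    ∀ N x', (∑ n ∈ Finset.range N, resSum p m F x n x') * Lsum p m x x₀
      ≤ Lsum p m x' x₀ := by
  intro N
  induction N with
  | zero => intro x'; simp
  | succ N ih =>
      intro x'
      set L := Lsum p m x x₀ with hL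
      set h : X → ℝ≥0∞ := fun y =>
        if y = x₀ then 0 else ENNReal.ofReal (m x' * p x' y) * Lsum p m y x₀ with hh
      have hswap : (∑ n ∈ Finset.range N, resSum p m F x (n+1) x')
          = ∑ y ∈ F, if y = x then 0
              else ENNReal.ofReal (m x' * p x' y)
                * ∑ n ∈ Finset.range N, resSum p m F x n y := by
        rw [Finset.sum_congr rfl fun n _ => (by rw [resSum] :
          resSum p m F x (n+1) x' = ∑ y ∈ F, if y = x then 0
            else ENNReal.ofReal (m x' * p x' y) * resSum p m F x n y)]
        rw [Finset.sum_comm]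
        refine Finset.sum_congr rfl fun y _ => ?_
        by_cases hyx : y = x
        · simp [hyx]
        · simp only [hyx, if_false, Finset.mul_sum]
      calc (∑ n ∈ Finset.range (N+1), resSum p m F x n x') * L
          = (∑ y ∈ F, if y = x then 0
              else ENNReal.ofReal (m x' * p x' y)
                * ∑ n ∈ Finset.range N, resSum p m F x n y) * L
            + ENNReal.ofReal (m x' * p x' x) * L := by
            rw [Finset.sum_range_succ', hswap, add_mul]
            rfl
        _ ≤ (∑ y ∈ F, if y = x then 0
              else ENNReal.ofReal (m x' * p x' y) * Lsum p m y x₀)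
            + ENNReal.ofReal (m x' * p x' x) * L := by
            refine add_le_add_left ?_ _
            rw [Finset.sum_mul]
            refine Finset.sum_le_sum fun y _ => ?_
            by_cases hyx : y = x
            · simp [hyx]
            · simp only [hyx, if_false]
              rw [mul_assoc]
              exact mul_le_mul_right (ih y) _
        _ = (∑ y ∈ F.erase x, h y) + h x := by
            congr 1
            · rw [← Finset.sum_subset (Finset.erase_subset x F)
                (fun y _ hy => ?_)]
              · refine Finset.sum_congr rfl fun y hy => ?_
                have hyx : y ≠ x := Finset.ne_of_mem_erase hy
                have hyx₀ : y ≠ x₀ := fun hc =>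
                  hF (hc ▸ Finset.mem_of_mem_erase hy)
                simp [hh, hyx, hyx₀]
              · have hyx : y = x := by
                  by_contra hc
                  exact hy (Finset.mem_erase.mpr ⟨hc, ‹y ∈ F›⟩)
                simp [hyx]
            · simp [hh, hx, hL]
        _ = ∑ y ∈ insert x (F.erase x), h y := by
            rw [Finset.sum_insert (Finset.notMem_erase x F), add_comm]
        _ ≤ ∑' y : X, h y := ENNReal.sum_le_tsum _
        _ ≤ ENNReal.ofReal (m x' * p x' x₀) + ∑' y : X, h y := le_add_self
        _ = Lsum p m x' x₀ := (Lsum_rec p m x₀ x').symm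

lemma all_finite_imp_le_one (hp0 : ∀ x y, 0 ≤ p x y) (hm1 : ∀ x, 1 ≤ m x)
    (hirr : ∀ x y, ∃ n : ℕ, 1 ≤ n ∧ 0 < matPow p n x y) [Infinite X]
    (hfin : ∀ x x₀ : X, Lsum p m x x₀ < ⊤) (x : X) : Lsum p m x x ≤ 1 := by
  by_contra hc
  push_neg at hc
  rw [Lsum, ENNReal.tsum_eq_iSup_nat, lt_iSup_iff] at hc
  obtain ⟨N, hN⟩ := hc
  rw [Finset.sum_congr rfl fun n _ => pathSum_eq_iSup_resSum x n x,
    ENNReal.finsetSum_iSup_of_monotone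
      (fun n F G hFG => resSum_mono hFG x n x), lt_iSup_iff] at hN
  obtain ⟨F, hF⟩ := hN
  obtain ⟨x₀, hx₀⟩ := Infinite.exists_notMem_finset (insert x F)
  have hxx₀ : x ≠ x₀ := fun hc => hx₀ (hc ▸ Finset.mem_insert_self x F)
  have hx₀F : x₀ ∉ F := fun hc => hx₀ (Finset.mem_insert_of_mem hc)
  have key := resSum_loop_bound (p := p) (m := m) hxx₀ hx₀F N x
  have hL0 : Lsum p m x x₀ ≠ 0 := ne_of_gt (Lsum_pos hp0 hm1 hirr x x₀)
  have hLt : Lsum p m x x₀ ≠ ⊤ := ne_of_lt (hfin x x₀)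
  have : (∑ n ∈ Finset.range N, resSum p m F x n x) ≤ 1 :=
    (ENNReal.mul_le_mul_iff_left hL0 hLt).mp (by rw [one_mul]; exact key)
  exact absurd hF (not_lt.mpr this)


end helpers


/-- equivalent criteria for transience of a branching Markov chain
with mean offspring `m` over an irreducible stochastic `P` on a countably infinite set:
(i) `L_m(x,x) ≤ 1` for some `x`; (i') `L_m(x,x) ≤ 1` for all `x`;
(ii) `L_m(x,x₀) < ∞` for all `x,x₀`; (iii) there is `f > 0` with
`m(x) ∑_y p(x,y) f(y) ≤ f(x)` for all `x`. -/
theorem transience_criteria_BMC {X : Type*} [Countable X] [Infinite X]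
    (p : X → X → ℝ)
    (hp0 : ∀ x y, 0 ≤ p x y) (hp1 : ∀ x, ∑' y : X, p x y = 1)
    (hirr : ∀ x y, ∃ n : ℕ, 1 ≤ n ∧ 0 < matPow p n x y)
    (m : X → ℝ) (hm1 : ∀ x, 1 ≤ m x) (hm : ∃ y, 1 < m y) :
    List.TFAE
      [ ∃ x : X, Lsum p m x x ≤ 1,
        ∀ x : X, Lsum p m x x ≤ 1,
        ∀ x x₀ : X, Lsum p m x x₀ < ⊤,
        ∃ f : X → ℝ, (∀ x, 0 < f x) ∧
          ∀ x, ENNReal.ofReal (m x) * ∑' y : X, ENNReal.ofReal (p x y * f y) ≤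
            ENNReal.ofReal (f x) ] := by
  have hm0 : ∀ x, 0 ≤ m x := fun x => le_trans zero_le_one (hm1 x)
  tfae_have 1 → 4 := fun ⟨a, ha⟩ => exists_superharmonic hp0 hm1 hirr ha
  tfae_have 4 → 3 := fun ⟨f, hf, hsup⟩ x x₀ => superharmonic_lt_top hp0 hm0 hf hsup x x₀
  tfae_have 3 → 2 := fun hfin x => all_finite_imp_le_one hp0 hm1 hirr hfin x
  tfae_have 2 → 1 := fun h => ⟨Classical.arbitrary X, h _⟩
  tfae_finish
end

section
/- Let P be an irreducible stochastic matrix on a countable set X with spectral radius ρ(P), and let t > 0. Then L_t(x,x) ≤ 1 for all x ∈ X if and only if t ≤ 1/ρ(P), where L_t denotes the weighted first-return sum with constant weight m ≡ t. (This is the transience/recurrence dichotomy for a branching Markov chain with constant mean offspring t: transient if t ≤ 1/ρ(P), recurrent if t > 1/ρ(P).) -/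
open scoped Classical ENNReal
open Filter

section BMCAux

open Finset
set_option linter.unusedSectionVars false
set_option maxHeartbeats 1000000

namespace BMC
variable {X : Type*} [Countable X]

noncomputable def Pe (p : X → X → ℝ) (x y : X) : ℝ≥0∞ := ENNReal.ofReal (p x y)

noncomputable def Q (p : X → X → ℝ) : ℕ → X → X → ℝ≥0∞
  | 0 => fun x y => if x = y then 1 else 0
  | n + 1 => fun x y => ∑' z : X, Pe p x z * Q p n z y

noncomputable def U (p : X → X → ℝ) (c : X) : ℕ → X → ℝ≥0∞
  | 0 => fun x => Pe p x c
  | n + 1 => fun x => ∑' y : {y : X // y ≠ c}, Pe p x y.1 * U p c n y.1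

variable {p : X → X → ℝ}

theorem tsum_split (c : X) (h : X → ℝ≥0∞) :
    ∑' z, h z = h c + ∑' z : {z : X // z ≠ c}, h z := by
  rw [ENNReal.tsum_eq_add_tsum_ite c]
  congr 1
  have h2 : (∑' z : {z : X // z ≠ c}, h z) = ∑' z, Set.indicator {z : X | z ≠ c} h z :=
    tsum_subtype _ _
  rw [h2]
  apply tsum_congr; intro z
  by_cases hz : z = c <;> simp [Set.indicator, hz]

theorem pathSum_eq {t : ℝ} (ht : 0 ≤ t) (c : X) (n : ℕ) (x : X) :
    pathSum p (fun _ => t) c n x = (ENNReal.ofReal t) ^ (n + 1) * U p c n x := by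
  induction n generalizing x with
  | zero => simp [pathSum, U, Pe, ENNReal.ofReal_mul ht]
  | succ n ih =>
    rw [show pathSum p (fun _ => t) c (n+1) x
        = ∑' y : {y : X // y ≠ c}, ENNReal.ofReal (t * p x y.1) * pathSum p (fun _ => t) c n y.1
        from rfl,
      show U p c (n+1) x = ∑' y : {y : X // y ≠ c}, Pe p x y.1 * U p c n y.1 from rfl,
      ← ENNReal.tsum_mul_left]
    apply tsum_congr; intro y
    rw [ih, ENNReal.ofReal_mul ht]
    show ENNReal.ofReal t * Pe p x y.1 * ((ENNReal.ofReal t) ^ (n+1) * U p c n y.1) = _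
    ring

theorem first_passage (c : X) : ∀ n (x : X),
    Q p (n + 1) x c = ∑ m ∈ Finset.range (n + 1), U p c m x * Q p (n - m) c c := by
  intro n
  induction n with
  | zero =>
    intro x
    rw [show Q p 1 x c = ∑' z, Pe p x z * Q p 0 z c from rfl]
    rw [show (∑' z, Pe p x z * Q p 0 z c) = ∑' z, if z = c then Pe p x z else 0 by
      apply tsum_congr; intro z; by_cases h : z = c <;> simp [Q, h]]
    rw [tsum_eq_single c (fun b hb => by simp [hb])]
    simp [U, Q]
  | succ n ih =>
    intro x
    rw [show Q p (n + 2) x c = ∑' z, Pe p x z * Q p (n + 1) z c from rfl,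
      tsum_split c (fun z => Pe p x z * Q p (n+1) z c)]
    have step : (∑' z : {z : X // z ≠ c}, Pe p x z.1 * Q p (n+1) z.1 c)
        = ∑ m ∈ Finset.range (n + 1), U p c (m+1) x * Q p (n - m) c c := by
      calc (∑' z : {z : X // z ≠ c}, Pe p x z.1 * Q p (n+1) z.1 c)
          = ∑' z : {z : X // z ≠ c}, ∑ m ∈ Finset.range (n+1),
              Pe p x z.1 * (U p c m z.1 * Q p (n - m) c c) := by
            apply tsum_congr; intro z; rw [ih z.1, Finset.mul_sum]
        _ = ∑ m ∈ Finset.range (n+1), ∑' z : {z : X // z ≠ c},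
              Pe p x z.1 * (U p c m z.1 * Q p (n - m) c c) := by
            exact Summable.tsum_finsetSum (fun m _ => ENNReal.summable)
        _ = ∑ m ∈ Finset.range (n+1), U p c (m+1) x * Q p (n - m) c c := by
            apply Finset.sum_congr rfl; intro m _
            rw [show U p c (m+1) x = ∑' y : {y : X // y ≠ c}, Pe p x y.1 * U p c m y.1 from rfl,
              ← ENNReal.tsum_mul_right]
            apply tsum_congr; intro z; ring
    rw [step]
    rw [Finset.sum_range_succ' (fun m => U p c m x * Q p (n + 1 - m) c c) (n+1)]
    simp only [Nat.succ_sub_succ_eq_sub, Nat.sub_zero]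
    rw [add_comm]
    congr 1

theorem Q_zero_diag (c : X) : Q p 0 c c = 1 := by simp [Q]

theorem renewal (c : X) (T : ℝ≥0∞) (k : ℕ) :
    T ^ (k+1) * Q p (k+1) c c
      = ∑ m ∈ range (k+1), (T ^ (m+1) * U p c m c) * (T ^ (k-m) * Q p (k-m) c c) := by
  rw [first_passage, Finset.mul_sum]
  apply Finset.sum_congr rfl
  intro m hm
  rw [Finset.mem_range] at hm
  have h : (m+1) + (k-m) = k+1 := by omega
  calc T^(k+1) * (U p c m c * Q p (k-m) c c)
      = (T^(m+1) * T^(k-m)) * (U p c m c * Q p (k-m) c c) := by rw [← pow_add, h]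
    _ = _ := by ring

theorem diag_sum (c : X) (T : ℝ≥0∞) (N : ℕ) :
    ∑ k ∈ range N, T^(k+1) * Q p (k+1) c c
      = ∑ ij ∈ (range N).biUnion (fun k => Finset.HasAntidiagonal.antidiagonal k),
          (T^(ij.1+1) * U p c ij.1 c) * (T^ij.2 * Q p ij.2 c c) := by
  rw [Finset.sum_biUnion]
  · apply Finset.sum_congr rfl; intro k _
    rw [Finset.Nat.sum_antidiagonal_eq_sum_range_succ_mk]
    exact renewal c T k
  · intro a _ b _ hab
    simp only [Finset.disjoint_left]
    intro ij hia hib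
    rw [Finset.HasAntidiagonal.mem_antidiagonal] at hia hib
    exact hab (hia ▸ hib ▸ rfl)

theorem partial_le (c : X) (T : ℝ≥0∞) (N : ℕ) :
    ∑ n ∈ range (N+1), T^n * Q p n c c
      ≤ 1 + (∑' m, T^(m+1) * U p c m c) * ∑ n ∈ range (N+1), T^n * Q p n c c := by
  have hsplit : ∑ n ∈ range (N+1), T^n * Q p n c c
      = 1 + ∑ k ∈ range N, T^(k+1) * Q p (k+1) c c := by
    rw [Finset.sum_range_succ' (fun n => T^n * Q p n c c) N, add_comm]
    simp only [pow_zero, Q_zero_diag, one_mul, mul_one]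
  rw [hsplit]
  apply add_le_add_right
  calc ∑ k ∈ range N, T^(k+1) * Q p (k+1) c c
      = ∑ ij ∈ (range N).biUnion (fun k => Finset.HasAntidiagonal.antidiagonal k),
          (T^(ij.1+1) * U p c ij.1 c) * (T^ij.2 * Q p ij.2 c c) := diag_sum c T N
    _ ≤ ∑ ij ∈ range N ×ˢ range N,
          (T^(ij.1+1) * U p c ij.1 c) * (T^ij.2 * Q p ij.2 c c) := by
        apply Finset.sum_le_sum_of_subset
        intro ij hij
        simp only [Finset.mem_biUnion, Finset.HasAntidiagonal.mem_antidiagonal] at hij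
        obtain ⟨k, hk, he⟩ := hij
        rw [Finset.mem_range] at hk
        have : ij.1 + ij.2 = k := he
        simp only [Finset.mem_product, Finset.mem_range]
        omega
    _ = (∑ m ∈ range N, T^(m+1) * U p c m c) * (∑ n ∈ range N, T^n * Q p n c c) := by
        rw [Finset.sum_mul_sum, Finset.sum_product]
    _ ≤ (∑' m, T^(m+1) * U p c m c) * (1 + ∑ k ∈ range N, T^(k+1) * Q p (k+1) c c) := by
        refine mul_le_mul' (ENNReal.sum_le_tsum (range N)) ?_
        rw [← hsplit]
        exact Finset.sum_le_sum_of_subset (Finset.range_subset_range.2 (Nat.le_succ N))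

theorem one_add_mul_le (c : X) (T : ℝ≥0∞) :
    1 + (∑' m, T^(m+1) * U p c m c) * (∑' n, T^n * Q p n c c)
      ≤ ∑' n, T^n * Q p n c c := by
  set f : ℕ → ℝ≥0∞ := fun m => T^(m+1) * U p c m c with hf
  set g : ℕ → ℝ≥0∞ := fun n => T^n * Q p n c c with hg
  have key : ∀ N : ℕ, 1 + (∑ m ∈ range N, f m) * (∑ n ∈ range N, g n) ≤ ∑' n, g n := by
    intro N
    have h1 : (∑ m ∈ range N, f m) * (∑ n ∈ range N, g n)
        = ∑ ij ∈ range N ×ˢ range N, f ij.1 * g ij.2 := by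
      rw [Finset.sum_mul_sum, Finset.sum_product]
    have h2 : ∑ ij ∈ range N ×ˢ range N, f ij.1 * g ij.2
        ≤ ∑ k ∈ range (2*N), g (k+1) := by
      rw [diag_sum c T (2*N)]
      apply Finset.sum_le_sum_of_subset
      intro ij hij
      simp only [Finset.mem_product, Finset.mem_range] at hij
      simp only [Finset.mem_biUnion, Finset.HasAntidiagonal.mem_antidiagonal]
      refine ⟨ij.1 + ij.2, ?_, rfl⟩
      simp only [Finset.mem_range]; omega
    have h3 : 1 + ∑ k ∈ range (2*N), g (k+1) ≤ ∑' n, g n := by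
      have : (1:ℝ≥0∞) + ∑ k ∈ range (2*N), g (k+1) = ∑ n ∈ range (2*N+1), g n := by
        rw [Finset.sum_range_succ' g (2*N), add_comm]
        congr 1
        simp [hg, Q_zero_diag]
      rw [this]
      exact ENNReal.sum_le_tsum _
    calc 1 + (∑ m ∈ range N, f m) * (∑ n ∈ range N, g n)
        ≤ 1 + ∑ k ∈ range (2*N), g (k+1) := by rw [h1]; gcongr
      _ ≤ ∑' n, g n := h3
  have hFG : (∑' m, f m) * (∑' n, g n) = ⨆ N : ℕ, (∑ m ∈ range N, f m) * (∑ n ∈ range N, g n) := by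
    rw [ENNReal.tsum_eq_iSup_nat (f := f), ENNReal.tsum_eq_iSup_nat (f := g),
      ENNReal.iSup_mul]
    apply le_antisymm
    · apply iSup_le; intro N
      rw [ENNReal.mul_iSup]
      apply iSup_le; intro M
      refine le_trans ?_ (le_iSup _ (max N M))
      gcongr with i hi
      · exact le_max_left N M
      · exact le_max_right N M
    · apply iSup_le; intro N
      refine le_trans ?_ (le_iSup _ N)
      gcongr
      exact le_iSup (fun M => ∑ n ∈ range M, g n) N
  rw [hFG, ENNReal.add_iSup]
  exact iSup_le key

section basic
variable (hp0 : ∀ x y, 0 ≤ p x y) (hp1 : ∀ x, ∑' y : X, p x y = 1)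
include hp0 hp1

theorem Pe_sum (x : X) : ∑' y, Pe p x y = 1 := by
  have hs : Summable (p x) := by
    by_contra h
    have := tsum_eq_zero_of_not_summable h
    rw [hp1 x] at this; norm_num at this
  simp only [Pe, ← ENNReal.ofReal_tsum_of_nonneg (hp0 x) hs, hp1 x, ENNReal.ofReal_one]

theorem Q_sum : ∀ n (x : X), ∑' y, Q p n x y = 1 := by
  intro n
  induction n with
  | zero =>
    intro x
    rw [show (∑' y, Q p 0 x y) = ∑' y, if y = x then (1:ℝ≥0∞) else 0 by
      apply tsum_congr; intro y; simp [Q, eq_comm]]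
    rw [tsum_ite_eq]
  | succ n ih =>
    intro x
    rw [show (∑' y, Q p (n+1) x y) = ∑' y, ∑' z, Pe p x z * Q p n z y from rfl]
    rw [ENNReal.tsum_comm]
    calc ∑' z, ∑' y, Pe p x z * Q p n z y = ∑' z, Pe p x z * ∑' y, Q p n z y := by
          apply tsum_congr; intro z; rw [ENNReal.tsum_mul_left]
      _ = 1 := by simp only [ih, mul_one, Pe_sum hp0 hp1]

theorem Q_le_one (n : ℕ) (x y : X) : Q p n x y ≤ 1 := by
  rw [← Q_sum hp0 hp1 n x]; exact ENNReal.le_tsum y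

theorem Q_ne_top (n : ℕ) (x y : X) : Q p n x y ≠ ∞ :=
  ne_top_of_le_ne_top ENNReal.one_ne_top (Q_le_one hp0 hp1 n x y)

theorem matPow_eq (n : ℕ) (x y : X) : matPow p n x y = (Q p n x y).toReal := by
  induction n generalizing x y with
  | zero => by_cases h : x = y <;> simp [matPow, Q, h]
  | succ n ih =>
    have h1 : ∀ z, Pe p x z * Q p n z y ≠ ∞ := fun z =>
      ENNReal.mul_ne_top ENNReal.ofReal_ne_top (Q_ne_top hp0 hp1 n z y)
    rw [show matPow p (n+1) x y = ∑' z, p x z * matPow p n z y from rfl,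
      show Q p (n+1) x y = ∑' z, Pe p x z * Q p n z y from rfl,
      ENNReal.tsum_toReal_eq h1]
    apply tsum_congr; intro z
    rw [ENNReal.toReal_mul, ih, Pe, ENNReal.toReal_ofReal (hp0 x z)]

theorem matPow_nonneg (n : ℕ) (x y : X) : 0 ≤ matPow p n x y := by
  rw [matPow_eq hp0 hp1]; exact ENNReal.toReal_nonneg

theorem matPow_le_one (n : ℕ) (x y : X) : matPow p n x y ≤ 1 := by
  rw [matPow_eq hp0 hp1]
  exact ENNReal.toReal_le_of_le_ofReal zero_le_one (by simpa using Q_le_one hp0 hp1 n x y)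

theorem Q_eq_ofReal (n : ℕ) (x y : X) : Q p n x y = ENNReal.ofReal (matPow p n x y) := by
  rw [matPow_eq hp0 hp1, ENNReal.ofReal_toReal (Q_ne_top hp0 hp1 n x y)]

theorem Q_add (m n : ℕ) (x y : X) : Q p (m + n) x y = ∑' z, Q p m x z * Q p n z y := by
  induction m generalizing x with
  | zero =>
    simp only [Nat.zero_add]
    rw [show (∑' z, Q p 0 x z * Q p n z y) = ∑' z, if z = x then Q p n z y else 0 by
      apply tsum_congr; intro z
      by_cases h : z = x <;> simp [Q, h, eq_comm, Ne.symm]]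
    rw [tsum_eq_single x (fun b hb => by simp [hb])]; simp
  | succ m ih =>
    have : m + 1 + n = (m + n) + 1 := by ring
    rw [this, show Q p ((m+n)+1) x y = ∑' z, Pe p x z * Q p (m+n) z y from rfl]
    calc ∑' z, Pe p x z * Q p (m + n) z y
        = ∑' z, ∑' w, Pe p x z * (Q p m z w * Q p n w y) := by
          apply tsum_congr; intro z; rw [ih, ENNReal.tsum_mul_left]
      _ = ∑' w, (∑' z, Pe p x z * Q p m z w) * Q p n w y := by
          rw [ENNReal.tsum_comm]
          apply tsum_congr; intro w
          rw [← ENNReal.tsum_mul_right]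
          apply tsum_congr; intro z; ring
      _ = ∑' w, Q p (m + 1) x w * Q p n w y := rfl

theorem Q_supermul (m n : ℕ) (c : X) : Q p m c c * Q p n c c ≤ Q p (m + n) c c := by
  rw [Q_add hp0 hp1]; exact ENNReal.le_tsum c

theorem F_lt_one_of_G_ne_top (c : X) (T : ℝ≥0∞)
    (hG : (∑' n, T^n * Q p n c c) ≠ ∞) :
    (∑' m, T^(m+1) * U p c m c) < 1 := by
  set F := ∑' m, T^(m+1) * U p c m c with hF
  set G := ∑' n, T^n * Q p n c c with hGdef
  have hG1 : 1 ≤ G := by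
    refine le_trans ?_ (ENNReal.le_tsum 0)
    simp [Q_zero_diag]
  by_contra h
  push_neg at h
  have h2 : 1 + G ≤ G := calc
    1 + G = 1 + 1 * G := by rw [one_mul]
    _ ≤ 1 + F * G := by gcongr
    _ ≤ G := one_add_mul_le c T
  have h3 : G < 1 + G := by
    conv_lhs => rw [← add_zero G]
    rw [add_comm 1 G]
    exact ENNReal.add_lt_add_left hG zero_lt_one
  exact absurd (lt_of_lt_of_le h3 h2) (lt_irrefl G)

theorem G_ne_top_of_F_lt_one (c : X) (T : ℝ≥0∞) (hT : T ≠ ∞)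
    (hF : (∑' m, T^(m+1) * U p c m c) < 1) :
    (∑' n, T^n * Q p n c c) ≠ ∞ := by
  set F := ∑' m, T^(m+1) * U p c m c with hFdef
  set φ := F.toReal with hφdef
  have hφ1 : φ < 1 := by
    rw [hφdef]
    exact ENNReal.toReal_lt_of_lt_ofReal (by simpa using hF)
  have hφ0 : 0 ≤ φ := ENNReal.toReal_nonneg
  have hSfin : ∀ N, (∑ n ∈ range (N+1), T^n * Q p n c c) ≠ ∞ := by
    intro N
    refine (ENNReal.sum_lt_top.2 (fun n _ => ?_)).ne
    exact ENNReal.mul_lt_top (ENNReal.pow_ne_top hT).lt_top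
      (lt_of_le_of_lt (Q_le_one hp0 hp1 n c c) ENNReal.one_lt_top)
  have key : ∀ N, (∑ n ∈ range (N+1), T^n * Q p n c c) ≤ ENNReal.ofReal (1/(1-φ)) := by
    intro N
    set S := ∑ n ∈ range (N+1), T^n * Q p n c c with hSdef
    have hineq := partial_le (p := p) c T N
    rw [← hSdef] at hineq
    have hRfin : (1 + F * S) ≠ ∞ := by
      refine ENNReal.add_ne_top.2 ⟨ENNReal.one_ne_top, ?_⟩
      exact ENNReal.mul_ne_top hF.ne_top (hSfin N)
    set a := S.toReal with hadef
    have ha : a ≤ 1 + φ * a := by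
      have := ENNReal.toReal_mono hRfin hineq
      rwa [ENNReal.toReal_add ENNReal.one_ne_top (ENNReal.mul_ne_top hF.ne_top (hSfin N)),
        ENNReal.toReal_mul, ENNReal.toReal_one] at this
    have ha0 : 0 ≤ a := ENNReal.toReal_nonneg
    have hub : a ≤ 1/(1-φ) := by
      rw [le_div_iff₀ (by linarith)]
      nlinarith
    calc S = ENNReal.ofReal a := by rw [hadef, ENNReal.ofReal_toReal (hSfin N)]
      _ ≤ ENNReal.ofReal (1/(1-φ)) := ENNReal.ofReal_le_ofReal hub
  rw [ENNReal.tsum_eq_iSup_nat]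
  have hall : ∀ N : ℕ, (∑ n ∈ range N, T^n * Q p n c c) ≤ ENNReal.ofReal (1/(1-φ)) :=
    fun N => le_trans
      (Finset.sum_le_sum_of_subset (Finset.range_subset_range.2 (Nat.le_succ N))) (key N)
  exact ne_top_of_le_ne_top ENNReal.ofReal_lt_top.ne (iSup_le hall)

theorem arad_nonneg (c : X) (n : ℕ) : 0 ≤ (matPow p n c c) ^ ((n:ℝ)⁻¹) :=
  Real.rpow_nonneg (matPow_nonneg hp0 hp1 n c c) _

theorem arad_le_one (c : X) (n : ℕ) : (matPow p n c c) ^ ((n:ℝ)⁻¹) ≤ 1 :=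
  Real.rpow_le_one (matPow_nonneg hp0 hp1 n c c) (matPow_le_one hp0 hp1 n c c)
    (by positivity)

theorem arad_bdd (c : X) :
    IsBoundedUnder (· ≤ ·) atTop (fun n : ℕ => (matPow p n c c) ^ ((n:ℝ)⁻¹)) :=
  isBoundedUnder_of ⟨1, arad_le_one hp0 hp1 c⟩

theorem arad_bddge (c : X) :
    IsBoundedUnder (· ≥ ·) atTop (fun n : ℕ => (matPow p n c c) ^ ((n:ℝ)⁻¹)) :=
  isBoundedUnder_of ⟨0, arad_nonneg hp0 hp1 c⟩

theorem specRad_nonneg (c : X) : 0 ≤ specRad p c :=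
  le_limsup_of_frequently_le
    (Frequently.of_forall (arad_nonneg hp0 hp1 c)) (arad_bdd hp0 hp1 c)

theorem arad_pow {c : X} {n : ℕ} (hn : n ≠ 0) :
    ((matPow p n c c) ^ ((n:ℝ)⁻¹)) ^ (n : ℕ) = matPow p n c c := by
  rw [← Real.rpow_natCast ((matPow p n c c) ^ ((n:ℝ)⁻¹)) n,
    ← Real.rpow_mul (matPow_nonneg hp0 hp1 n c c),
    inv_mul_cancel₀ (by exact_mod_cast hn), Real.rpow_one]

theorem eventually_pow_lt {c : X} {r : ℝ} (hr : specRad p c < r) :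
    ∀ᶠ n : ℕ in atTop, matPow p n c c < r ^ n := by
  have h1 : ∀ᶠ n : ℕ in atTop, (matPow p n c c) ^ ((n:ℝ)⁻¹) < r :=
    eventually_lt_of_limsup_lt hr (arad_bdd hp0 hp1 c)
  filter_upwards [h1, eventually_ge_atTop 1] with n hn h1n
  have := pow_lt_pow_left₀ hn (arad_nonneg hp0 hp1 c n) (by omega : n ≠ 0)
  rwa [arad_pow hp0 hp1 (by omega : n ≠ 0)] at this

theorem matPow_supermul (m n : ℕ) (c : X) :
    matPow p m c c * matPow p n c c ≤ matPow p (m + n) c c := by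
  rw [matPow_eq hp0 hp1, matPow_eq hp0 hp1, matPow_eq hp0 hp1, ← ENNReal.toReal_mul]
  exact ENNReal.toReal_mono (Q_ne_top hp0 hp1 _ c c) (Q_supermul hp0 hp1 m n c)

theorem matPow_pow (n₀ : ℕ) (c : X) : ∀ k : ℕ,
    (matPow p n₀ c c) ^ k ≤ matPow p (k * n₀) c c
  | 0 => by simp [matPow]
  | (k+1) => by
      calc (matPow p n₀ c c) ^ (k+1) = (matPow p n₀ c c)^k * matPow p n₀ c c := by ring
        _ ≤ matPow p (k * n₀) c c * matPow p n₀ c c := by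
            apply mul_le_mul_of_nonneg_right (matPow_pow n₀ c k)
              (matPow_nonneg hp0 hp1 _ c c)
        _ ≤ matPow p (k * n₀ + n₀) c c := matPow_supermul hp0 hp1 _ _ c
        _ = matPow p ((k+1) * n₀) c c := by ring_nf

theorem specRad_pos (c : X) (hirr : ∀ x y : X, ∃ n : ℕ, 1 ≤ n ∧ 0 < matPow p n x y) :
    0 < specRad p c := by
  obtain ⟨n₀, hn₀, hq⟩ := hirr c c
  set ε := (matPow p n₀ c c) ^ ((n₀:ℝ)⁻¹) with hε
  have hε0 : 0 < ε := Real.rpow_pos_of_pos hq _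
  refine lt_of_lt_of_le hε0 (le_limsup_of_frequently_le ?_ (arad_bdd hp0 hp1 c))
  rw [Filter.frequently_atTop]
  intro N
  refine ⟨(max 1 N) * n₀, ?_, ?_⟩
  · calc N ≤ max 1 N := le_max_right 1 N
      _ ≤ (max 1 N) * n₀ := Nat.le_mul_of_pos_right _ (by omega)
  · set k := max 1 N with hk
    have hk1 : 1 ≤ k := le_max_left 1 N
    have hkn : (k * n₀ : ℕ) ≠ 0 := by positivity
    have hle : (matPow p n₀ c c) ^ k ≤ matPow p (k * n₀) c c := matPow_pow hp0 hp1 n₀ c k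
    have : ((matPow p n₀ c c) ^ k) ^ (((k * n₀ : ℕ) : ℝ))⁻¹
        ≤ (matPow p (k * n₀) c c) ^ (((k * n₀ : ℕ) : ℝ))⁻¹ :=
      Real.rpow_le_rpow (by positivity) hle (by positivity)
    refine le_trans (le_of_eq ?_) this
    rw [← Real.rpow_natCast (matPow p n₀ c c) k, ← Real.rpow_mul (le_of_lt hq)]
    congr 1
    have hk0 : (k:ℝ) ≠ 0 := Nat.cast_ne_zero.2 (by omega)
    have hn0 : (n₀:ℝ) ≠ 0 := Nat.cast_ne_zero.2 (by omega)
    push_cast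
    rw [show ((k:ℝ) * (n₀:ℝ))⁻¹ = (k:ℝ)⁻¹ * (n₀:ℝ)⁻¹ by rw [mul_inv]]
    rw [← mul_assoc, mul_inv_cancel₀ hk0, one_mul]

theorem specRad_le (c d : X) (hirr : ∀ x y : X, ∃ n : ℕ, 1 ≤ n ∧ 0 < matPow p n x y) :
    specRad p c ≤ specRad p d := by
  obtain ⟨a, ha1, hα⟩ := hirr d c
  obtain ⟨b, hb1, hβ⟩ := hirr c d
  set α := matPow p a d c with hαdef
  set β := matPow p b c d with hβdef
  have sandwich : ∀ n : ℕ, α * matPow p n c c * β ≤ matPow p (a + n + b) d d := by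
    intro n
    have e1 : Q p a d c * Q p n c c ≤ Q p (a + n) d c := by
      rw [Q_add hp0 hp1 a n d c]
      exact le_trans (le_of_eq rfl) (ENNReal.le_tsum c)
    have e2 : Q p (a + n) d c * Q p b c d ≤ Q p (a + n + b) d d := by
      rw [Q_add hp0 hp1 (a+n) b d d]
      exact ENNReal.le_tsum c
    have := le_trans (mul_le_mul_left e1 (Q p b c d)) e2
    have h2 := ENNReal.toReal_mono (Q_ne_top hp0 hp1 _ d d) this
    rw [ENNReal.toReal_mul, ENNReal.toReal_mul] at h2
    rw [← matPow_eq hp0 hp1, ← matPow_eq hp0 hp1, ← matPow_eq hp0 hp1,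
      ← matPow_eq hp0 hp1] at h2
    calc α * matPow p n c c * β = matPow p a d c * matPow p n c c * matPow p b c d := rfl
      _ ≤ matPow p (a + n + b) d d := h2
  have main : ∀ r : ℝ, specRad p d < r → specRad p c ≤ r := by
    intro r hr
    have hr0 : 0 < r := lt_of_le_of_lt (specRad_nonneg hp0 hp1 d) hr
    have hαβ : 0 < α * β := mul_pos hα hβ
    set C := (α * β)⁻¹ * r ^ (a + b) with hC
    have hC0 : 0 < C := by positivity
    have hev : ∀ᶠ n : ℕ in atTop, matPow p n c c ≤ C * r ^ n := by
      have h2 := eventually_pow_lt hp0 hp1 hr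
      rw [Filter.eventually_atTop] at h2
      obtain ⟨M, hM⟩ := h2
      rw [Filter.eventually_atTop]
      refine ⟨M, fun n hn => ?_⟩
      have h3 : matPow p (a + n + b) d d < r ^ (a + n + b) := hM _ (by omega)
      have h4 : α * matPow p n c c * β ≤ r ^ (a + n + b) := le_of_lt
        (lt_of_le_of_lt (sandwich n) h3)
      have h5 : matPow p n c c ≤ (α * β)⁻¹ * r ^ (a + n + b) := by
        rw [le_inv_mul_iff₀ hαβ] at *
        calc α * β * matPow p n c c = α * matPow p n c c * β := by ring
          _ ≤ r ^ (a + n + b) := h4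
      calc matPow p n c c ≤ (α * β)⁻¹ * r ^ (a + n + b) := h5
        _ = C * r ^ n := by
            rw [hC, show a + n + b = (a + b) + n by ring, pow_add]
            ring
    have hroot : ∀ᶠ n : ℕ in atTop, (matPow p n c c) ^ ((n:ℝ)⁻¹) ≤ C ^ ((n:ℝ)⁻¹) * r := by
      filter_upwards [hev, eventually_ge_atTop 1] with n hn hn1
      have hrn : (0:ℝ) ≤ C * r ^ n := by positivity
      calc (matPow p n c c) ^ ((n:ℝ)⁻¹) ≤ (C * r ^ n) ^ ((n:ℝ)⁻¹) :=
            Real.rpow_le_rpow (matPow_nonneg hp0 hp1 n c c) hn (by positivity)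
        _ = C ^ ((n:ℝ)⁻¹) * (r ^ n) ^ ((n:ℝ)⁻¹) :=
            Real.mul_rpow (le_of_lt hC0) (by positivity)
        _ = C ^ ((n:ℝ)⁻¹) * r := by
            congr 1
            rw [← Real.rpow_natCast r n, ← Real.rpow_mul (le_of_lt hr0),
              mul_inv_cancel₀ (by exact_mod_cast (by omega : n ≠ 0)), Real.rpow_one]
    have hlim : Tendsto (fun n : ℕ => C ^ ((n:ℝ)⁻¹) * r) atTop (nhds r) := by
      have h1 : Tendsto (fun n : ℕ => ((n:ℝ)⁻¹)) atTop (nhds 0) :=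
        tendsto_inv_atTop_zero.comp tendsto_natCast_atTop_atTop
      have h2 : Tendsto (fun n : ℕ => C ^ ((n:ℝ)⁻¹)) atTop (nhds 1) := by
        have hc : ContinuousAt (fun x : ℝ => C ^ x) 0 :=
          Real.continuousAt_const_rpow (ne_of_gt hC0)
        have := hc.tendsto.comp h1
        simpa [Function.comp_def, Real.rpow_zero] using this
      have := h2.mul_const r
      simpa using this
    calc specRad p c ≤ limsup (fun n : ℕ => C ^ ((n:ℝ)⁻¹) * r) atTop :=
          limsup_le_limsup hroot ((arad_bddge hp0 hp1 c).isCoboundedUnder_le)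
            hlim.isBoundedUnder_le
      _ = r := hlim.limsup_eq
  by_contra hcon
  push_neg at hcon
  have := main ((specRad p d + specRad p c)/2) (by linarith)
  linarith

theorem G_ne_top (c : X) {s : ℝ} (hs : 0 < s) (h : s * specRad p c < 1) :
    (∑' n, (ENNReal.ofReal s)^n * Q p n c c) ≠ ∞ := by
  have hρ0 : 0 ≤ s * specRad p c := mul_nonneg hs.le (specRad_nonneg hp0 hp1 c)
  set r := (s * specRad p c + 1)/2 with hrdef
  have hr1 : r < 1 := by rw [hrdef]; linarith
  have hr0 : 0 < r := by rw [hrdef]; linarith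
  have hρr : specRad p c < r / s := by
    rw [lt_div_iff₀ hs, mul_comm]
    rw [hrdef]; linarith
  obtain ⟨N, hN⟩ := Filter.eventually_atTop.1 (eventually_pow_lt hp0 hp1 hρr)
  have hterm : ∀ n, N ≤ n → (ENNReal.ofReal s)^n * Q p n c c ≤ (ENNReal.ofReal r)^n := by
    intro n hn
    rw [Q_eq_ofReal hp0 hp1, ← ENNReal.ofReal_pow hs.le,
      ← ENNReal.ofReal_mul (pow_nonneg hs.le n), ← ENNReal.ofReal_pow hr0.le]
    apply ENNReal.ofReal_le_ofReal
    calc s^n * matPow p n c c ≤ s^n * (r/s)^n :=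
          mul_le_mul_of_nonneg_left (hN n hn).le (pow_nonneg hs.le n)
      _ = r^n := by rw [div_pow]; field_simp
  have hgeo : (∑' i : ℕ, (ENNReal.ofReal r)^i) ≠ ∞ := by
    rw [ENNReal.tsum_geometric]
    refine ENNReal.inv_ne_top.2 ?_
    simp only [ne_eq, tsub_eq_zero_iff_le, not_le]
    exact ENNReal.ofReal_lt_one.2 hr1
  have hmaj : (∑' n : ℕ, (ENNReal.ofReal s)^n * Q p n c c)
      ≤ ∑' n : ℕ, ((if n < N then (ENNReal.ofReal s)^n * Q p n c c else 0)
          + (ENNReal.ofReal r)^n) := by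
    refine ENNReal.tsum_le_tsum (fun n => ?_)
    by_cases hn : n < N
    · simp only [hn, if_true]; exact le_self_add
    · simp only [hn, if_false, zero_add]
      exact hterm n (by omega)
  have hfin : (∑' n : ℕ, ((if n < N then (ENNReal.ofReal s)^n * Q p n c c else 0)
      + (ENNReal.ofReal r)^n)) ≠ ∞ := by
    rw [ENNReal.tsum_add]
    refine ENNReal.add_ne_top.2 ⟨?_, hgeo⟩
    have heq : (∑' n : ℕ, (if n < N then (ENNReal.ofReal s)^n * Q p n c c else 0))
        = ∑ n ∈ range N, (ENNReal.ofReal s)^n * Q p n c c := by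
      rw [tsum_eq_sum (s := range N) (fun b hb => by
        simp only [Finset.mem_range] at hb
        simp [hb])]
      apply Finset.sum_congr rfl
      intro n hn
      simp only [Finset.mem_range] at hn
      simp [hn]
    rw [heq]
    refine (ENNReal.sum_lt_top.2 (fun n _ => ?_)).ne
    exact ENNReal.mul_lt_top (ENNReal.pow_ne_top ENNReal.ofReal_ne_top).lt_top
      (lt_of_le_of_lt (Q_le_one hp0 hp1 n c c) ENNReal.one_lt_top)
  exact ne_top_of_le_ne_top hfin hmaj

theorem G_eq_top (c : X) {s : ℝ} (hs : 0 < s) (h : 1 < s * specRad p c) :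
    (∑' n, (ENNReal.ofReal s)^n * Q p n c c) = ∞ := by
  by_contra hG
  have hzero : Tendsto (fun n : ℕ => (ENNReal.ofReal s)^n * Q p n c c) atTop (nhds 0) :=
    ENNReal.tendsto_atTop_zero_of_tsum_ne_top hG
  have hev : ∀ᶠ n : ℕ in atTop, (ENNReal.ofReal s)^n * Q p n c c < 1 :=
    hzero.eventually_lt_const zero_lt_one
  have hfreq : ∃ᶠ n : ℕ in atTop, 1/s < (matPow p n c c) ^ ((n:ℝ)⁻¹) := by
    apply frequently_lt_of_lt_limsup ((arad_bddge hp0 hp1 c).isCoboundedUnder_le)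
    rw [div_lt_iff₀ hs, mul_comm]
    exact h
  obtain ⟨n, hlt, hsm, hn1⟩ := (hfreq.and_eventually (hev.and (eventually_ge_atTop 1))).exists
  have hq : (1/s)^n < matPow p n c c := by
    have := pow_lt_pow_left₀ hlt (by positivity) (by omega : n ≠ 0)
    rwa [arad_pow hp0 hp1 (by omega : n ≠ 0)] at this
  have h1 : (1:ℝ) < s^n * matPow p n c c := by
    have h2 : s^n * (1/s)^n < s^n * matPow p n c c :=
      mul_lt_mul_of_pos_left hq (by positivity)
    calc (1:ℝ) = s^n * (1/s)^n := by rw [div_pow, one_pow]; field_simp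
      _ < _ := h2
  have : (1:ℝ≥0∞) < (ENNReal.ofReal s)^n * Q p n c c := by
    rw [Q_eq_ofReal hp0 hp1, ← ENNReal.ofReal_pow hs.le,
      ← ENNReal.ofReal_mul (pow_nonneg hs.le n)]
    exact ENNReal.one_lt_ofReal.2 h1
  exact absurd hsm (not_lt.2 this.le)

end basic
end BMC
end BMCAux

set_option maxHeartbeats 1000000 in
/-- for an irreducible stochastic matrix `P` and `t > 0`, the branching
Markov chain with constant mean offspring `t` is transient (`L_t(x,x) ≤ 1` for all `x`)
if and only if `t ≤ 1/ρ(P)`. -/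
theorem transience_dichotomy_constant_offspring {X : Type*} [Countable X]
    (p : X → X → ℝ)
    (hp0 : ∀ x y, 0 ≤ p x y) (hp1 : ∀ x, ∑' y : X, p x y = 1)
    (hirr : ∀ x y, ∃ n : ℕ, 1 ≤ n ∧ 0 < matPow p n x y)
    (t : ℝ) (ht : 0 < t) (x₀ : X) :
    (∀ x : X, Lsum p (fun _ => t) x x ≤ 1) ↔ t ≤ 1 / specRad p x₀ := by
  have hρ0 : 0 < specRad p x₀ := BMC.specRad_pos hp0 hp1 x₀ hirr
  have hLrw : ∀ x : X, Lsum p (fun _ => t) x x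
      = ∑' n : ℕ, (ENNReal.ofReal t)^(n+1) * BMC.U p x n x := by
    intro x
    exact tsum_congr (fun n => BMC.pathSum_eq ht.le x n x)
  constructor
  · intro hL
    by_contra hcon
    push_neg at hcon
    -- 1/ρ < t
    set ρ := specRad p x₀ with hρ
    set s := (1/ρ + t)/2 with hsdef
    have h1ρ : 0 < 1/ρ := by positivity
    have hs0 : 0 < s := by rw [hsdef]; linarith
    have hst : s < t := by rw [hsdef]; linarith
    have h1s : 1/ρ < s := by rw [hsdef]; linarith
    have hsρ : 1 < s * ρ := by
      rw [div_lt_iff₀ hρ0] at h1s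
      linarith
    have hGtop := BMC.G_eq_top hp0 hp1 x₀ hs0 hsρ
    have hFS : 1 ≤ ∑' m : ℕ, (ENNReal.ofReal s)^(m+1) * BMC.U p x₀ m x₀ := by
      by_contra hF
      push_neg at hF
      exact absurd hGtop
        (BMC.G_ne_top_of_F_lt_one hp0 hp1 x₀ (ENNReal.ofReal s) ENNReal.ofReal_ne_top hF)
    -- monotonicity S ≤ T
    have hSTle : ENNReal.ofReal s ≤ ENNReal.ofReal t := ENNReal.ofReal_le_ofReal hst.le
    have hmono : ∀ n : ℕ, (ENNReal.ofReal s)^(n+1) * BMC.U p x₀ n x₀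
        ≤ (ENNReal.ofReal t)^(n+1) * BMC.U p x₀ n x₀ :=
      fun n => mul_le_mul' (pow_le_pow_left' hSTle (n+1)) le_rfl
    have hFT : 1 < ∑' n : ℕ, (ENNReal.ofReal t)^(n+1) * BMC.U p x₀ n x₀ := by
      set FS := ∑' m : ℕ, (ENNReal.ofReal s)^(m+1) * BMC.U p x₀ m x₀ with hFSdef
      by_cases hFStop : FS = ∞
      · have : (∑' n : ℕ, (ENNReal.ofReal t)^(n+1) * BMC.U p x₀ n x₀) = ∞ :=
          eq_top_mono (hFStop ▸ ENNReal.tsum_le_tsum hmono) rfl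
        rw [this]; exact ENNReal.one_lt_top
      · -- finite case: find a nonzero term and strictly increase it
        have hex : ∃ m : ℕ, (ENNReal.ofReal s)^(m+1) * BMC.U p x₀ m x₀ ≠ 0 := by
          by_contra hall
          push_neg at hall
          have : FS = 0 := by
            rw [hFSdef]
            exact ENNReal.tsum_eq_zero.2 hall
          rw [this] at hFS
          exact absurd hFS (by simp)
        obtain ⟨m, hm⟩ := hex
        have hfmS_ne_top : (ENNReal.ofReal s)^(m+1) * BMC.U p x₀ m x₀ ≠ ∞ :=
          ne_top_of_le_ne_top hFStop (ENNReal.le_tsum m)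
        have hU0 : BMC.U p x₀ m x₀ ≠ 0 := by
          intro h0
          rw [h0, mul_zero] at hm
          exact hm rfl
        have hUtop : BMC.U p x₀ m x₀ ≠ ∞ := by
          intro h0
          rw [h0] at hfmS_ne_top
          apply hfmS_ne_top
          rw [ENNReal.mul_top]
          simp only [ne_eq, pow_eq_zero_iff', ENNReal.ofReal_eq_zero, not_le]
          intro hcontra
          exact absurd hcontra.1 (by simp [hs0])
        have hSTlt : ENNReal.ofReal s < ENNReal.ofReal t := by
          rw [ENNReal.ofReal_lt_ofReal_iff ht]
          exact hst
        have hfm_lt : (ENNReal.ofReal s)^(m+1) * BMC.U p x₀ m x₀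
            < (ENNReal.ofReal t)^(m+1) * BMC.U p x₀ m x₀ := by
          apply ENNReal.mul_lt_mul_left hU0 hUtop
          exact ENNReal.pow_lt_pow_left (by omega) hSTlt
        -- split off term m
        have hTeq : (∑' n : ℕ, (ENNReal.ofReal t)^(n+1) * BMC.U p x₀ n x₀)
            = (ENNReal.ofReal t)^(m+1) * BMC.U p x₀ m x₀
              + ∑' n : ℕ, (if n = m then 0 else (ENNReal.ofReal t)^(n+1) * BMC.U p x₀ n x₀) := by
          have h := ENNReal.tsum_eq_add_tsum_ite
            (f := fun n : ℕ => (ENNReal.ofReal t)^(n+1) * BMC.U p x₀ n x₀) m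
          convert h using 2
          exact tsum_congr (fun n => by split_ifs <;> rfl)
        have hSeq : FS = (ENNReal.ofReal s)^(m+1) * BMC.U p x₀ m x₀
              + ∑' n : ℕ, (if n = m then 0 else (ENNReal.ofReal s)^(n+1) * BMC.U p x₀ n x₀) := by
          have h := ENNReal.tsum_eq_add_tsum_ite
            (f := fun n : ℕ => (ENNReal.ofReal s)^(n+1) * BMC.U p x₀ n x₀) m
          convert h using 2
          exact tsum_congr (fun n => by split_ifs <;> rfl)
        set restS := ∑' n : ℕ, (if n = m then 0 else (ENNReal.ofReal s)^(n+1) * BMC.U p x₀ n x₀)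
          with hrestS
        have hrest_le : restS
            ≤ ∑' n : ℕ, (if n = m then 0 else (ENNReal.ofReal t)^(n+1) * BMC.U p x₀ n x₀) := by
          refine ENNReal.tsum_le_tsum (fun n => ?_)
          by_cases hn : n = m
          · simp [hn]
          · simp only [hn, if_false]
            exact hmono n
        have hrestS_ne_top : restS ≠ ∞ := by
          intro h0
          apply hFStop
          rw [hSeq, h0, add_top]
        calc (1:ℝ≥0∞) ≤ FS := hFS
          _ = (ENNReal.ofReal s)^(m+1) * BMC.U p x₀ m x₀ + restS := hSeq
          _ < (ENNReal.ofReal t)^(m+1) * BMC.U p x₀ m x₀ + restS :=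
              ENNReal.add_lt_add_right hrestS_ne_top hfm_lt
          _ ≤ (ENNReal.ofReal t)^(m+1) * BMC.U p x₀ m x₀
              + ∑' n : ℕ, (if n = m then 0 else (ENNReal.ofReal t)^(n+1) * BMC.U p x₀ n x₀) :=
              add_le_add_right hrest_le _
          _ = ∑' n : ℕ, (ENNReal.ofReal t)^(n+1) * BMC.U p x₀ n x₀ := hTeq.symm
    have := hL x₀
    rw [hLrw x₀] at this
    exact absurd hFT (not_lt.2 this)
  · intro hle x
    rw [hLrw x]
    have hρx : specRad p x ≤ specRad p x₀ := BMC.specRad_le hp0 hp1 x x₀ hirr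
    have htρ : t * specRad p x₀ ≤ 1 := by
      rw [le_div_iff₀ hρ0] at hle
      exact hle
    rw [ENNReal.tsum_eq_iSup_nat]
    apply iSup_le
    intro N
    -- partial sums are at most (t/s)^N for all 0 < s < t
    have key : ∀ s : ℝ, 0 < s → s < t →
        (∑ n ∈ Finset.range N, (ENNReal.ofReal t)^(n+1) * BMC.U p x n x)
          ≤ ENNReal.ofReal ((t/s)^N) := by
      intro s hs0 hst
      have hsρ : s * specRad p x < 1 := by
        calc s * specRad p x ≤ s * specRad p x₀ :=
              mul_le_mul_of_nonneg_left hρx hs0.le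
          _ < t * specRad p x₀ := by
              apply mul_lt_mul_of_pos_right hst hρ0
          _ ≤ 1 := htρ
      have hGfin := BMC.G_ne_top hp0 hp1 x hs0 hsρ
      have hF : (∑' m : ℕ, (ENNReal.ofReal s)^(m+1) * BMC.U p x m x) < 1 :=
        BMC.F_lt_one_of_G_ne_top hp0 hp1 x (ENNReal.ofReal s) hGfin
      have hts1 : 1 ≤ t/s := by
        rw [le_div_iff₀ hs0]; linarith
      have hterm : ∀ n ∈ Finset.range N, (ENNReal.ofReal t)^(n+1) * BMC.U p x n x
          ≤ ENNReal.ofReal ((t/s)^N) * ((ENNReal.ofReal s)^(n+1) * BMC.U p x n x) := by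
        intro n hn
        rw [Finset.mem_range] at hn
        have hpow : (ENNReal.ofReal t)^(n+1)
            ≤ ENNReal.ofReal ((t/s)^N) * (ENNReal.ofReal s)^(n+1) := by
          have heq : t = (t/s) * s := by field_simp
          calc (ENNReal.ofReal t)^(n+1)
              = (ENNReal.ofReal ((t/s) * s))^(n+1) := by rw [← heq]
            _ = (ENNReal.ofReal (t/s) * ENNReal.ofReal s)^(n+1) := by
                rw [ENNReal.ofReal_mul (by positivity)]
            _ = (ENNReal.ofReal (t/s))^(n+1) * (ENNReal.ofReal s)^(n+1) := by
                rw [mul_pow]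
            _ ≤ (ENNReal.ofReal (t/s))^N * (ENNReal.ofReal s)^(n+1) := by
                refine mul_le_mul' (pow_le_pow_right' ?_ (by omega)) le_rfl
                rw [show (1:ℝ≥0∞) = ENNReal.ofReal 1 by simp]
                exact ENNReal.ofReal_le_ofReal hts1
            _ = ENNReal.ofReal ((t/s)^N) * (ENNReal.ofReal s)^(n+1) := by
                rw [ENNReal.ofReal_pow (by positivity)]
        calc (ENNReal.ofReal t)^(n+1) * BMC.U p x n x
            ≤ (ENNReal.ofReal ((t/s)^N) * (ENNReal.ofReal s)^(n+1)) * BMC.U p x n x :=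
              mul_le_mul' hpow le_rfl
          _ = ENNReal.ofReal ((t/s)^N) * ((ENNReal.ofReal s)^(n+1) * BMC.U p x n x) := by
              rw [mul_assoc]
      calc (∑ n ∈ Finset.range N, (ENNReal.ofReal t)^(n+1) * BMC.U p x n x)
          ≤ ∑ n ∈ Finset.range N,
              ENNReal.ofReal ((t/s)^N) * ((ENNReal.ofReal s)^(n+1) * BMC.U p x n x) :=
            Finset.sum_le_sum hterm
        _ = ENNReal.ofReal ((t/s)^N)
              * ∑ n ∈ Finset.range N, (ENNReal.ofReal s)^(n+1) * BMC.U p x n x := by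
            rw [Finset.mul_sum]
        _ ≤ ENNReal.ofReal ((t/s)^N)
              * ∑' n : ℕ, (ENNReal.ofReal s)^(n+1) * BMC.U p x n x :=
            mul_le_mul' le_rfl (ENNReal.sum_le_tsum _)
        _ ≤ ENNReal.ofReal ((t/s)^N) * 1 := mul_le_mul' le_rfl hF.le
        _ = ENNReal.ofReal ((t/s)^N) := by rw [mul_one]
    -- take s_k = t / r_k with r_k = (k+2)/(k+1) → 1
    have hbound : ∀ k : ℕ,
        (∑ n ∈ Finset.range N, (ENNReal.ofReal t)^(n+1) * BMC.U p x n x)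
          ≤ ENNReal.ofReal ((((k:ℝ)+2)/((k:ℝ)+1))^N) := by
      intro k
      have hr1 : (1:ℝ) < ((k:ℝ)+2)/((k:ℝ)+1) := by
        rw [lt_div_iff₀ (by positivity)]
        linarith
      set s := t / (((k:ℝ)+2)/((k:ℝ)+1)) with hsdef
      have hs0 : 0 < s := by
        rw [hsdef]; positivity
      have hst : s < t := by
        rw [hsdef]
        exact div_lt_self ht hr1
      have hts : t / s = ((k:ℝ)+2)/((k:ℝ)+1) := by
        rw [hsdef]
        field_simp
      have := key s hs0 hst
      rwa [hts] at this
    have htends : Tendsto (fun k : ℕ => ENNReal.ofReal ((((k:ℝ)+2)/((k:ℝ)+1))^N))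
        atTop (nhds 1) := by
      have h1 : Tendsto (fun k : ℕ => (((k:ℝ)+2)/((k:ℝ)+1))) atTop (nhds 1) := by
        have heq : ∀ k : ℕ, (((k:ℝ)+2)/((k:ℝ)+1)) = 1 + 1/((k:ℝ)+1) := by
          intro k
          field_simp
          ring
        simp only [heq]
        have h2 : Tendsto (fun k : ℕ => 1/((k:ℝ)+1)) atTop (nhds 0) :=
          tendsto_one_div_add_atTop_nhds_zero_nat
        have := h2.const_add 1
        simpa using this
      have h3 : Tendsto (fun k : ℕ => (((k:ℝ)+2)/((k:ℝ)+1))^N) atTop (nhds 1) := by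
        have := h1.pow N
        simpa using this
      have := (ENNReal.continuous_ofReal.tendsto 1).comp h3
      simpa [Function.comp_def] using this
    exact ge_of_tendsto htends (Filter.Eventually.of_forall hbound)
end
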